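/- arXiv:1705.05060 — 7 statements merged into one kernel-verified Lean document; each statement's English description precedes it below -/
import Mathlib

section
/- With the Euclidean chain conventions (λ_j = 0 for j > l), the translated intervals C̃_i := { x + λ_0 : x ∈ C_i } satisfy C̃_i = [K − λ_{2i−1}, K − λ_{2i+1} − 1] for each i ∈ [0, ⌈l/2⌉], and their union over i is exactly [λ_0, K − 1]. -/
/-! Translating by `λ_0 = K - D - 1` turns `C_i` into `[K - λ_{2i-1}, K - λ_{2i+1})`. Since the
chain satisfies `λ_{j+2} ≤ λ_j`, these half-open intervals are consecutive, so their union
telescopes from `K - λ_{-1} = λ_0` to `K - λ_{2⌈l/2⌉+1} = K`, the last term vanishing because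
`2⌈l/2⌉ + 1 > l`. -/

/-- Euclidean chain: `lam K D 0 = λ_{-1} = D+1`, `lam K D 1 = λ_0 = K-D-1`, and
`lam K D (i+1) = λ_i` is the remainder of `λ_{i-2}` divided by `λ_{i-1}`
(with the convention that once a term is `0`, all later terms are `0`). -/
def lam (K D : ℕ) : ℕ → ℕ
  | 0 => D + 1
  | 1 => K - D - 1
  | (n + 2) => if lam K D (n + 1) = 0 then 0 else lam K D n % lam K D (n + 1)

/-- The column interval `C_i = [D - λ_{2i-1} + 1, D - λ_{2i+1}]` (as a set of integers);
for `i = 0` this is `[0, β_0 λ_0 - 1]` (empty when `β_0 = 0`), and for `i = ⌈l/2⌉`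
it is `[D - λ_{2⌈l/2⌉-1} + 1, D]` since `λ_j = 0` for `j > l`. -/
noncomputable def Cset (K D : ℕ) (i : ℕ) : Finset ℤ :=
  Finset.Icc ((D : ℤ) - lam K D (2*i) + 1) ((D : ℤ) - lam K D (2*i+2))

open Finset

theorem Finset.biUnion_range_Ico_of_monotone {α : Type*} [LinearOrder α] [LocallyFiniteOrder α]
    {a : ℕ → α} (ha : Monotone a) (n : ℕ) :
    (range n).biUnion (fun i => Ico (a i) (a (i + 1))) = Ico (a 0) (a n) := by
  induction n with
  | zero => simp
  | succ n ih =>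
    rw [range_add_one, biUnion_insert, ih, union_comm,
      Ico_union_Ico_eq_Ico (ha n.zero_le) (ha n.le_succ)]

lemma lam_add_two_le (K D n : ℕ) : lam K D (n + 2) ≤ lam K D n := by
  rw [lam]
  split
  · exact Nat.zero_le _
  · exact Nat.mod_le _ _

lemma lam_eq_zero_of_le {K D n m : ℕ} (h : lam K D n = 0) (hnm : n ≤ m) : lam K D m = 0 := by
  induction m, hnm using Nat.le_induction with
  | base => exact h
  | succ m _ ih =>
    cases m with
    | zero => simp [lam] at ih
    | succ k => simp [lam, ih]

lemma Cset_image_add (K D i : ℕ) :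
    (Cset K D i).image (· + ((K : ℤ) - D - 1)) =
      Icc ((K : ℤ) - lam K D (2 * i)) ((K : ℤ) - lam K D (2 * i + 2) - 1) := by
  rw [Cset, image_add_right_Icc]
  congr 1 <;> ring

theorem stmt5_general (K D l : ℕ) (hl' : lam K D (l + 2) = 0) :
    (∀ i ≤ (l+1)/2,
      (Cset K D i).image (fun x => x + ((K : ℤ) - D - 1)) =
        Finset.Icc ((K : ℤ) - lam K D (2*i)) ((K : ℤ) - lam K D (2*i+2) - 1)) ∧
    (Finset.range ((l+1)/2 + 1)).biUnion
        (fun i => (Cset K D i).image (fun x => x + ((K : ℤ) - D - 1)))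
      = Finset.Icc ((K : ℤ) - D - 1) ((K : ℤ) - 1) := by
  refine ⟨fun i _ => Cset_image_add K D i, ?_⟩
  have hmono : Monotone fun i => (K : ℤ) - lam K D (2 * i) :=
    monotone_nat_of_le_succ fun i => by
      have := lam_add_two_le K D (2 * i)
      show _ ≤ (K : ℤ) - lam K D (2 * i + 2)
      omega
  have hlast : lam K D (2 * ((l + 1) / 2 + 1)) = 0 := lam_eq_zero_of_le hl' (by omega)
  have hunion := biUnion_range_Ico_of_monotone hmono ((l + 1) / 2 + 1)
  simp only [hlast, lam, Nat.cast_zero, sub_zero] at hunion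
  simp only [Cset_image_add, Icc_sub_one_right_eq_Ico]
  rw [sub_sub, ← Nat.cast_add_one]
  exact hunion

/-- The translated intervals `C̃_i = {x + λ_0 : x ∈ C_i}` satisfy
`C̃_i = [K - λ_{2i-1}, K - λ_{2i+1} - 1]` for each `i ≤ ⌈l/2⌉`, and their union is
exactly `[λ_0, K-1]` (here `λ_0 = K - D - 1`). -/
theorem stmt5 (K D l : ℕ) (hDK : D + 1 < K)
    (hl : lam K D (l + 1) ≠ 0) (hl' : lam K D (l + 2) = 0) :
    (∀ i ≤ (l+1)/2,
      (Cset K D i).image (fun x => x + ((K : ℤ) - D - 1)) =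
        Finset.Icc ((K : ℤ) - lam K D (2*i)) ((K : ℤ) - lam K D (2*i+2) - 1)) ∧
    (Finset.range ((l+1)/2 + 1)).biUnion
        (fun i => (Cset K D i).image (fun x => x + ((K : ℤ) - D - 1)))
      = Finset.Icc ((K : ℤ) - D - 1) ((K : ℤ) - 1) :=
  stmt5_general K D l hl'
end

section
/- In the AIR matrix L of size K × (D+1), if L(j,k) = 1 lies in an odd submatrix I_{β_{2i+1} λ_{2i+1} × λ_{2i+1}}, then the up-distance d_up(j,k) equals λ_{2i+1}; i.e., the previous 1 in column k above row j occurs exactly λ_{2i+1} rows earlier. -/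
def airFill : ℕ → ℕ → ℕ → ℕ → Bool
  | m, n, j, k =>
    if h : n = 0 then false
    else if j < m - m % n then decide (j % n = k)
    else airFill n (m % n) k (j - (m - m % n))
  termination_by m n _ _ => n
  decreasing_by exact Nat.mod_lt _ (Nat.pos_of_ne_zero h)

def ddown (K D k : ℕ) : ℕ :=
  (((Finset.range K).filter (fun j => airFill K (D+1) j k = true)).sup id) - k

def dup (K D j k : ℕ) : ℕ :=
  j - (((Finset.range j).filter (fun j' => airFill K (D+1) j' k = true)).sup id)

noncomputable def dright (K D j k : ℕ) : ℕ :=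
  sInf {k' : ℕ | k < k' ∧ airFill K (D+1) j k' = true} - k

/-! ### Auxiliary machinery -/

/-- The Euclidean chain attached to an `m × n` AIR matrix. -/
def mu (m n : ℕ) : ℕ → ℕ
  | 0 => n
  | 1 => m % n
  | (t + 2) => if mu m n (t + 1) = 0 then 0 else mu m n t % mu m n (t + 1)

lemma mu_succ_le (m n : ℕ) (hn : 0 < n) : ∀ t, mu m n (t + 1) ≤ mu m n t
  | 0 => le_of_lt (Nat.mod_lt _ hn)
  | (t + 1) => by
      show (if mu m n (t + 1) = 0 then 0 else mu m n t % mu m n (t + 1)) ≤ mu m n (t + 1)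
      split
      · omega
      · exact le_of_lt (Nat.mod_lt _ (by omega))

lemma mu_anti (m n : ℕ) (hn : 0 < n) : Antitone (mu m n) :=
  antitone_nat_of_succ_le (mu_succ_le m n hn)

lemma air_top {m n j k : ℕ} (hn : n ≠ 0) (hj : j < m - m % n) :
    airFill m n j k = decide (j % n = k) := by
  rw [airFill]; simp [hn, hj]

lemma air_bot {m n j k : ℕ} (hn : n ≠ 0) (hj : m - m % n ≤ j) :
    airFill m n j k = airFill n (m % n) k (j - (m - m % n)) := by
  rw [airFill]; simp [hn, Nat.not_lt.2 hj]

lemma air_two_step {m n j k : ℕ} (hn : n ≠ 0) (hm : m % n ≠ 0)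
    (hj : m - m % n ≤ j) (hk : n - n % (m % n) ≤ k) :
    airFill m n j k = airFill (m % n) (n % (m % n)) (j - (m - m % n)) (k - (n - n % (m % n))) := by
  rw [air_bot hn hj, air_bot hm hk]

lemma le_sub_mod {m n : ℕ} (hn : 0 < n) (hnm : n ≤ m) : n ≤ m - m % n := by
  have h1 := Nat.div_add_mod m n
  have h2 : 1 ≤ m / n := (Nat.one_le_div_iff hn).2 hnm
  have h3 : n * 1 ≤ n * (m / n) := Nat.mul_le_mul_left n h2
  omega

lemma dvd_sub_mod' (m n : ℕ) : n ∣ (m - m % n) := by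
  have h1 := Nat.div_add_mod m n
  exact ⟨m / n, by omega⟩

lemma mu_shift {m n : ℕ} (hm : m % n ≠ 0) (hnn : n % (m % n) ≠ 0) :
    ∀ t, mu (m % n) (n % (m % n)) t = mu m n (t + 2) := by
  have h0 : mu (m % n) (n % (m % n)) 0 = mu m n 2 := by
    show n % (m % n) = if mu m n 1 = 0 then 0 else mu m n 0 % mu m n 1
    show n % (m % n) = if m % n = 0 then 0 else n % (m % n)
    simp [hm]
  have h1 : mu (m % n) (n % (m % n)) 1 = mu m n 3 := by
    show (m % n) % (n % (m % n)) = if mu m n 2 = 0 then 0 else mu m n 1 % mu m n 2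
    rw [← h0]
    show (m % n) % (n % (m % n)) =
      if mu (m % n) (n % (m % n)) 0 = 0 then 0 else m % n % mu (m % n) (n % (m % n)) 0
    simp [show mu (m % n) (n % (m % n)) 0 = n % (m % n) from rfl, hnn]
  have key : ∀ t, mu (m % n) (n % (m % n)) t = mu m n (t + 2) ∧
      mu (m % n) (n % (m % n)) (t + 1) = mu m n (t + 3) := by
    intro t
    induction t with
    | zero => exact ⟨h0, h1⟩
    | succ t ih =>
      refine ⟨ih.2, ?_⟩
      show (if mu (m % n) (n % (m % n)) (t + 1) = 0 then 0
          else mu (m % n) (n % (m % n)) t % mu (m % n) (n % (m % n)) (t + 1)) = mu m n (t + 4)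
      rw [ih.1, ih.2]
      rfl
  exact fun t => (key t).1

/-- Main structural lemma: in band `s` of the `m × n` AIR matrix (rows
`[m - μ_{2s-1}, m - μ_{2s+1})`), the previous one above a one in column `k`
is exactly `μ_{2s}` rows up (or, in band `0`, the one is the topmost). -/
lemma keyP : ∀ s m n j k : ℕ, 0 < n → n ≤ m → mu m n (2 * s) ≠ 0 →
    (∀ s', s = s' + 1 → m - mu m n (2 * s' + 1) ≤ j) →
    j < m - mu m n (2 * s + 1) →
    n - mu m n (2 * s) ≤ k → k < n →
    airFill m n j k = true →
    (mu m n (2 * s) ≤ j ∧ airFill m n (j - mu m n (2 * s)) k = true ∧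
      ∀ j', j - mu m n (2 * s) < j' → j' < j → airFill m n j' k = false) ∨
    (s = 0 ∧ j < n ∧ ∀ j', j' < j → airFill m n j' k = false) := by
  intro s
  induction s with
  | zero =>
    intro m n j k hn hnm _ _ hhi _ hk hair
    have e0 : 2 * 0 = 0 := by norm_num
    have e1 : 2 * 0 + 1 = 1 := by norm_num
    rw [e1] at hhi
    rw [e0] at *
    have hg0 : mu m n 0 = n := rfl
    have hmu1 : mu m n 1 = m % n := rfl
    rw [hg0]
    rw [hmu1] at hhi
    have htop : j % n = k := by
      rw [air_top (by omega) hhi] at hair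
      exact of_decide_eq_true hair
    have hnsub : n ≤ m - m % n := le_sub_mod hn hnm
    by_cases hjn : n ≤ j
    · left
      refine ⟨hjn, ?_, ?_⟩
      · rw [air_top (by omega) (by omega)]
        have : j % n = (j - n) % n := Nat.mod_eq_sub_mod hjn
        simp [← this, htop]
      · intro j' h1 h2
        rw [air_top (by omega) (by omega)]
        simp only [decide_eq_false_iff_not]
        intro hmod
        have hle : j' ≤ j := le_of_lt h2
        have hdvd : n ∣ j - j' := (Nat.modEq_iff_dvd' hle).1 (htop.trans hmod.symm).symm
        have h3 : 0 < j - j' := by omega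
        have := Nat.le_of_dvd h3 hdvd
        omega
    · right
      have hjlt : j < n := by omega
      have hjk : j = k := by rw [Nat.mod_eq_of_lt hjlt] at htop; exact htop
      refine ⟨rfl, hjlt, ?_⟩
      intro j' hj'
      rw [air_top (by omega) (by omega)]
      simp only [decide_eq_false_iff_not]
      rw [Nat.mod_eq_of_lt (by omega)]
      omega
  | succ s IH =>
    intro m n j k hn hnm hg hlo hhi hk1 hk2 hair
    have e1 : 2 * (s + 1) = 2 * s + 2 := by ring
    have e2 : 2 * (s + 1) + 1 = 2 * s + 3 := by ring
    rw [e1] at hg hk1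
    rw [e2] at hhi
    rw [e1]
    have hanti := mu_anti m n hn
    -- basic chain facts
    have hmu1 : mu m n 1 = m % n := rfl
    have h1 : m % n ≠ 0 := by
      intro h
      have h2 : mu m n 2 = 0 := by
        show (if mu m n 1 = 0 then 0 else mu m n 0 % mu m n 1) = 0
        simp [hmu1, h]
      have h3 : mu m n (2 * s + 2) ≤ mu m n 2 := hanti (by omega)
      omega
    have hmu2 : mu m n 2 = n % (m % n) := by
      show (if mu m n 1 = 0 then 0 else mu m n 0 % mu m n 1) = n % (m % n)
      simp [hmu1, h1]; rfl
    have h2 : n % (m % n) ≠ 0 := by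
      intro h
      have h3 : mu m n (2 * s + 2) ≤ mu m n 2 := hanti (by omega)
      omega
    have hn1n : m % n < n := Nat.mod_lt _ hn
    have hn1m : m % n ≤ m := by omega
    have hn2n1 : n % (m % n) < m % n := Nat.mod_lt _ (by omega)
    have hnsub : n ≤ m - m % n := le_sub_mod hn hnm
    have hshift := mu_shift h1 h2
    -- band location
    have hlo' : m - mu m n (2 * s + 1) ≤ j := hlo s rfl
    have hmu2s1 : mu m n (2 * s + 1) ≤ m % n := by
      have h3 : mu m n (2 * s + 1) ≤ mu m n 1 := hanti (by omega)
      omega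
    have hjbot : m - m % n ≤ j := by omega
    have hgn2 : mu m n (2 * s + 2) ≤ n % (m % n) := by
      have h3 : mu m n (2 * s + 2) ≤ mu m n 2 := hanti (by omega)
      omega
    have hkbot : n - n % (m % n) ≤ k := by omega
    -- translate to the submatrix
    have hair' : airFill (m % n) (n % (m % n)) (j - (m - m % n)) (k - (n - n % (m % n))) = true := by
      rw [← air_two_step (by omega) h1 hjbot hkbot]
      exact hair
    have hmu3 : mu m n (2 * s + 3) ≤ m % n := by
      have h3 : mu m n (2 * s + 3) ≤ mu m n 1 := hanti (by omega)
      omega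
    have hIH := IH (m % n) (n % (m % n)) (j - (m - m % n)) (k - (n - n % (m % n)))
      (by omega) (by omega)
      (by rw [hshift]; exact hg)
      (by
        intro s' hs'
        rw [hshift]
        have heq : 2 * s' + 1 + 2 = 2 * s + 1 := by omega
        rw [heq]
        omega)
      (by
        rw [hshift]
        have heq : 2 * s + 1 + 2 = 2 * s + 3 := by omega
        rw [heq]
        omega)
      (by rw [hshift]; omega)
      (by omega)
      hair'
    have hgsub : mu (m % n) (n % (m % n)) (2 * s) = mu m n (2 * s + 2) := hshift (2 * s)
    rw [hgsub] at hIH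
    rcases hIH with ⟨hgj', hairp', hnone'⟩ | ⟨hs0, hj'lt, hnone'⟩
    · -- previous one in the same recursive block
      left
      refine ⟨by omega, ?_, ?_⟩
      · rw [air_two_step (by omega) h1 (by omega) hkbot]
        have heq : j - mu m n (2 * s + 2) - (m - m % n) = j - (m - m % n) - mu m n (2 * s + 2) := by
          omega
        rw [heq]
        exact hairp'
      · intro j'' hb1 hb2
        rw [air_two_step (by omega) h1 (by omega) hkbot]
        exact hnone' (j'' - (m - m % n)) (by omega) (by omega)
    · -- the one found was the topmost of the recursive block
      have hgn2' : mu m n (2 * s + 2) = n % (m % n) := by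
        rw [← hgsub, hs0]
        rfl
      rw [hgn2']
      -- (j - (m - m%n)) = (k - (n - n%(m%n)))
      have hn2sub : n % (m % n) ≤ m % n - (m % n) % (n % (m % n)) :=
        le_sub_mod (by omega) (by omega)
      have hj'k' : j - (m - m % n) = k - (n - n % (m % n)) := by
        rw [air_top (by omega) (by omega)] at hair'
        have := of_decide_eq_true hair'
        rwa [Nat.mod_eq_of_lt (by omega)] at this
      left
      obtain ⟨c, hc⟩ := dvd_sub_mod' m n
      have hc1 : 1 ≤ c := by
        rcases Nat.eq_zero_or_pos c with h | h
        · exfalso; rw [h, Nat.mul_zero] at hc; omega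
        · exact h
      have hnc : n * (c - 1) + n = n * c := by
        rw [← Nat.mul_succ]; congr 1; omega
      have hgj : n % (m % n) ≤ j := by omega
      refine ⟨hgj, ?_, ?_⟩
      -- the previous one: p = j - g = (m - m%n - n) + k = n*(c-1) + k
      · have hpval : j - n % (m % n) = n * (c - 1) + k := by omega
        rw [hpval, air_top (by omega) (by omega)]
        simp only [decide_eq_true_eq]
        rw [Nat.add_comm, Nat.add_mul_mod_self_left]
        exact Nat.mod_eq_of_lt hk2
      · intro j'' hb1 hb2
        by_cases hcase : j'' < m - m % n
        · rw [air_top (by omega) hcase]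
          simp only [decide_eq_false_iff_not]
          intro hmod
          have hdiv := Nat.div_add_mod j'' n
          rw [hmod] at hdiv
          have hlt : j'' / n < c := by
            refine Nat.lt_of_mul_lt_mul_left (a := n) ?_
            omega
          have hle2 : n * (j'' / n) ≤ n * (c - 1) := Nat.mul_le_mul_left n (by omega)
          omega
        · rw [air_two_step (by omega) h1 (by omega) hkbot]
          exact hnone' (j'' - (m - m % n)) (by omega)

/-! ### Bridging `lam` and `mu` -/

lemma lam_zero_succ {K D t : ℕ} (h : lam K D (t + 1) = 0) : lam K D (t + 2) = 0 := by
  show (if lam K D (t + 1) = 0 then 0 else lam K D t % lam K D (t + 1)) = 0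
  simp [h]

lemma lam_zero_up {K D b : ℕ} (h : lam K D (b + 1) = 0) :
    ∀ d, lam K D (b + 1 + d) = 0 := by
  intro d
  induction d with
  | zero => exact h
  | succ d ih =>
    have : b + 1 + (d + 1) = (b + d) + 2 := by omega
    rw [this]
    apply lam_zero_succ
    have : b + d + 1 = b + 1 + d := by omega
    rw [this]
    exact ih

lemma lam_ne_zero_down {K D a b : ℕ} (h : lam K D (a + 1) ≠ 0) (hba : b ≤ a) :
    lam K D (b + 1) ≠ 0 := by
  intro h0
  apply h
  have := lam_zero_up h0 (a - b)
  have heq : b + 1 + (a - b) = a + 1 := by omega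
  rwa [heq] at this

lemma mu_lam_A {K D : ℕ} (hDK : D + 1 < K) (h2 : K < 2 * (D + 1)) :
    ∀ t, mu K (D + 1) t = lam K D t := by
  have h0 : mu K (D + 1) 0 = lam K D 0 := rfl
  have hmod : K % (D + 1) = K - D - 1 := by
    rw [Nat.mod_eq_sub_mod (by omega), Nat.mod_eq_of_lt (by omega)]
    omega
  have h1 : mu K (D + 1) 1 = lam K D 1 := hmod
  have key : ∀ t, mu K (D + 1) t = lam K D t ∧ mu K (D + 1) (t + 1) = lam K D (t + 1) := by
    intro t
    induction t with
    | zero => exact ⟨h0, h1⟩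
    | succ t ih =>
      refine ⟨ih.2, ?_⟩
      show (if mu K (D + 1) (t + 1) = 0 then 0 else mu K (D + 1) t % mu K (D + 1) (t + 1)) =
        lam K D (t + 2)
      rw [ih.1, ih.2]
      rfl
  exact fun t => (key t).1

lemma mu_lam_C {K D : ℕ} (h2 : 2 * (D + 1) < K) :
    ∀ t, mu K (D + 1) t = lam K D (t + 2) := by
  have hlam1 : lam K D 1 = K - D - 1 := rfl
  have hlam2 : lam K D 2 = D + 1 := by
    show (if lam K D 1 = 0 then 0 else lam K D 0 % lam K D 1) = D + 1
    rw [hlam1]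
    have : ¬ (K - D - 1 = 0) := by omega
    simp [this]
    show (D + 1) % (K - D - 1) = D + 1
    exact Nat.mod_eq_of_lt (by omega)
  have h0 : mu K (D + 1) 0 = lam K D 2 := by rw [hlam2]; rfl
  have hlam3 : lam K D 3 = K % (D + 1) := by
    show (if lam K D 2 = 0 then 0 else lam K D 1 % lam K D 2) = K % (D + 1)
    rw [hlam2, hlam1]
    simp
    show (K - D - 1) % (D + 1) = K % (D + 1)
    have : K - D - 1 = K - (D + 1) := by omega
    rw [this, ← Nat.mod_eq_sub_mod (by omega)]
  have h1 : mu K (D + 1) 1 = lam K D 3 := by rw [hlam3]; rfl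
  have key : ∀ t, mu K (D + 1) t = lam K D (t + 2) ∧
      mu K (D + 1) (t + 1) = lam K D (t + 3) := by
    intro t
    induction t with
    | zero => exact ⟨h0, h1⟩
    | succ t ih =>
      refine ⟨ih.2, ?_⟩
      show (if mu K (D + 1) (t + 1) = 0 then 0 else mu K (D + 1) t % mu K (D + 1) (t + 1)) =
        lam K D (t + 4)
      rw [ih.1, ih.2]
      show _ = (if lam K D (t + 3) = 0 then 0 else lam K D (t + 2) % lam K D (t + 3))
      rfl
  exact fun t => (key t).1

/-! ### Computing `dup` from the previous-one description -/

lemma dup_eq_of_prev {K D j k g : ℕ} (hg : g ≠ 0) (hgj : g ≤ j)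
    (hair : airFill K (D + 1) (j - g) k = true)
    (hnone : ∀ j', j - g < j' → j' < j → airFill K (D + 1) j' k = false) :
    dup K D j k = g := by
  unfold dup
  have hmem : j - g ∈ (Finset.range j).filter (fun j' => airFill K (D + 1) j' k = true) := by
    simp only [Finset.mem_filter, Finset.mem_range]
    exact ⟨by omega, hair⟩
  have hle : j - g ≤ ((Finset.range j).filter
      (fun j' => airFill K (D + 1) j' k = true)).sup id :=
    Finset.le_sup (f := id) hmem
  have hge : ((Finset.range j).filter
      (fun j' => airFill K (D + 1) j' k = true)).sup id ≤ j - g := by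
    apply Finset.sup_le
    intro x hx
    simp only [Finset.mem_filter, Finset.mem_range] at hx
    by_contra hgt
    have : j - g < x := by simpa [id] using Nat.lt_of_not_le (by simpa using hgt)
    have := hnone x this hx.1
    rw [this] at hx
    exact absurd hx.2 (by simp)
  omega

/-! ### Main theorem -/

/-- Up-distance in an odd ('fat') submatrix `I_{β_{2i+1}λ_{2i+1} × λ_{2i+1}}`
(rows `[K - λ_{2i}, K - λ_{2i+2} - 1]`, columns `[D + 1 - λ_{2i+1}, D]`):
if `L(j,k) = 1` there (with `j ≥ D+1`), then `d_up(j,k) = λ_{2i+1}`. -/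
theorem stmt7 (K D l i j k : ℕ) (hDK : D + 1 < K)
    (hl : lam K D (l + 1) ≠ 0) (hl' : lam K D (l + 2) = 0)
    (hodd : 2*i + 1 ≤ l)
    (hrow1 : K - lam K D (2*i+1) ≤ j) (hrow2 : j < K - lam K D (2*i+3))
    (hcol1 : D + 1 - lam K D (2*i+2) ≤ k) (hcol2 : k ≤ D)
    (hj : D + 1 ≤ j)
    (hjk : airFill K (D+1) j k = true) :
    dup K D j k = lam K D (2*i+2) := by
  have hg : lam K D (2 * i + 2) ≠ 0 := lam_ne_zero_down hl (by omega)
  have hgB : lam K D 2 ≠ 0 := lam_ne_zero_down hl (by omega)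
  have hKne : K ≠ 2 * (D + 1) := by
    intro hK
    apply hgB
    show (if lam K D 1 = 0 then 0 else lam K D 0 % lam K D 1) = 0
    have h1 : lam K D 1 = D + 1 := by show K - D - 1 = D + 1; omega
    have h0 : lam K D 0 = D + 1 := rfl
    rw [h0, h1]
    simp
  rcases Nat.lt_or_ge K (2 * (D + 1)) with hA | hC
  · -- Case A : D+1 ≤ K < 2(D+1), mu t = lam t, use band s = i+1
    have hmu := mu_lam_A hDK hA
    have hP := keyP (i + 1) K (D + 1) j k (by omega) (by omega)
      (by rw [show 2 * (i + 1) = 2 * i + 2 by ring, hmu]; exact hg)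
      (by
        intro s' hs'
        have : s' = i := by omega
        subst this
        rw [hmu]
        exact hrow1)
      (by rw [show 2 * (i + 1) + 1 = 2 * i + 3 by ring, hmu]; exact hrow2)
      (by rw [show 2 * (i + 1) = 2 * i + 2 by ring, hmu]; exact hcol1)
      (by omega)
      hjk
    rw [show 2 * (i + 1) = 2 * i + 2 by ring, hmu] at hP
    rcases hP with ⟨hgj, hair, hnone⟩ | ⟨hcontra, _, _⟩
    · exact dup_eq_of_prev hg hgj hair hnone
    · exact absurd hcontra (by omega)
  · -- Case C : K > 2(D+1) (equality excluded), mu t = lam (t+2), use band s = i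
    have hC' : 2 * (D + 1) < K := by omega
    have hmu := mu_lam_C hC'
    have hP := keyP i K (D + 1) j k (by omega) (by omega)
      (by rw [hmu]; rw [show 2 * i + 2 = 2 * i + 2 from rfl] at hg; exact hg)
      (by
        intro s' hs'
        subst hs'
        rw [hmu]
        rw [show 2 * s' + 1 + 2 = 2 * (s' + 1) + 1 by ring]
        exact hrow1)
      (by rw [hmu, show 2 * i + 1 + 2 = 2 * i + 3 by ring]; exact hrow2)
      (by rw [hmu]; exact hcol1)
      (by omega)
      hjk
    rw [hmu] at hP
    rcases hP with ⟨hgj, hair, hnone⟩ | ⟨hi0, hjlt, _⟩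
    · exact dup_eq_of_prev hg hgj hair hnone
    · omega
end

section
/- In the AIR matrix L of size K × (D+1), if L(j,k) = 1 lies in an even submatrix I_{λ_{2i} × β_{2i} λ_{2i}} with within-block column index k_R = c·λ_{2i} + d (0 ≤ d < λ_{2i}), then d_up(j,k) = λ_{2i−1} − c·λ_{2i}. -/
/-!
Below its top identity block, the `m × n` AIR matrix (`n ≤ m`, `r = m % n`) is the transpose
of the `n × r` AIR matrix, whose own lower part is the transpose of the `r × (n % r)` one. So
two unfoldings of the construction carry the even block `i + 1` of the remainder sequence
`n, r, n % r, …` onto the even block `i` of the corner matrix, translating rows and columns,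
and up-distances are invariant under this translation. In the first even block the `1` of
column `k = c r + d` sits in row `m - r + d`, and the nearest `1` above it is the one of column
`k` in the last identity block, `n - c r` rows higher.

The chain `λ` starts with `λ₀ = K - D - 1` rather than `K % (D + 1)`; for `K < 2 (D + 1)` the
two agree, and for `K > 2 (D + 1)` the chain `λ` is the remainder sequence of the matrix
shifted by two, leaving only the block `i = 0`, where the up-distance is `D + 1`, to be
treated apart.
-/

namespace Nat

lemma mod_add_le_of_le {a b : ℕ} (h : b ≤ a) : a % b + b ≤ a := by
  have := Nat.mod_le (a - b) b
  rw [← Nat.mod_eq_sub_mod h] at this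
  omega

lemma le_sub_mod_of_le {m n : ℕ} (h : n ≤ m) : n ≤ m - m % n := by
  have := mod_add_le_of_le h
  omega

lemma mod_ne_of_lt_of_lt_add {a b n : ℕ} (hab : a < b) (hb : b < a + n) : b % n ≠ a % n := by
  intro h
  have := Nat.le_of_dvd (by omega) (Nat.dvd_of_mod_eq_zero (Nat.sub_mod_eq_zero_of_mod_eq h))
  omega

end Nat

def remSeq (a b : ℕ) : ℕ → ℕ
  | 0 => a
  | 1 => b
  | (n + 2) => if remSeq a b (n + 1) = 0 then 0 else remSeq a b n % remSeq a b (n + 1)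

section remSeq

variable {a b : ℕ}

lemma lam_eq_remSeq (K D : ℕ) : ∀ t, lam K D t = remSeq (D + 1) (K - D - 1) t
  | 0 => rfl
  | 1 => rfl
  | t + 2 => by rw [lam, remSeq, lam_eq_remSeq K D t, lam_eq_remSeq K D (t + 1)]

lemma remSeq_add_two_le (t : ℕ) : remSeq a b (t + 2) ≤ remSeq a b (t + 1) := by
  rw [remSeq]
  split_ifs with h
  · exact Nat.zero_le _
  · exact (Nat.mod_lt _ (Nat.pos_of_ne_zero h)).le

lemma remSeq_le_of_le {s t : ℕ} (hs : 1 ≤ s) (hst : s ≤ t) :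
    remSeq a b t ≤ remSeq a b s := by
  obtain ⟨s, rfl⟩ : ∃ s', s = s' + 1 := ⟨s - 1, by omega⟩
  obtain ⟨t, rfl⟩ : ∃ t', t = t' + 1 := ⟨t - 1, by omega⟩
  exact antitone_nat_of_succ_le (f := fun t => remSeq a b (t + 1)) remSeq_add_two_le (by omega)

lemma remSeq_antitone (hba : b ≤ a) : Antitone (remSeq a b) :=
  antitone_nat_of_succ_le fun
    | 0 => hba
    | t + 1 => remSeq_add_two_le t

lemma remSeq_two (hb : b ≠ 0) : remSeq a b 2 = a % b := by
  simp [remSeq, hb]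

lemma remSeq_mod (hb : b ≠ 0) : ∀ t, remSeq b (a % b) t = remSeq a b (t + 1)
  | 0 => rfl
  | 1 => (remSeq_two hb).symm
  | t + 2 => by rw [remSeq, remSeq_mod hb t, remSeq_mod hb (t + 1)]; rfl

lemma two_mul_remSeq_add_two_le {t : ℕ} (h : remSeq a b (t + 1) ≤ remSeq a b t) :
    2 * remSeq a b (t + 2) ≤ remSeq a b t := by
  rw [remSeq]
  split_ifs with h0
  · omega
  · have := Nat.mod_lt (remSeq a b t) (Nat.pos_of_ne_zero h0)
    have := Nat.mod_add_le_of_le h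
    omega

lemma mod_sub_remSeq_eq_sub (hba : b ≤ a) (i : ℕ) {k : ℕ} (hk : k < a)
    (hk' : a - remSeq a b (2 * i) ≤ k) :
    k % (a - remSeq a b (2 * i)) = k - (a - remSeq a b (2 * i)) := by
  rcases i with _ | i
  · simp [remSeq]
  · rw [Nat.mul_succ] at hk' ⊢
    have h2 := two_mul_remSeq_add_two_le (remSeq_antitone hba (Nat.le_succ (2 * i)))
    have h0 := remSeq_antitone hba (Nat.zero_le (2 * i))
    rw [Nat.mod_eq_sub_mod hk', Nat.mod_eq_of_lt (by simp only [remSeq] at h0; omega)]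

end remSeq

section airFill

variable {m n j k : ℕ}

lemma airFill_of_lt_sub_mod (hn : n ≠ 0) (hj : j < m - m % n) :
    airFill m n j k = decide (j % n = k) := by
  rw [airFill]
  simp [hn, hj]

lemma airFill_sub_mod_add (hn : n ≠ 0) (q : ℕ) :
    airFill m n (m - m % n + q) k = airFill n (m % n) k q := by
  rw [airFill]
  simp [hn]

lemma airFill_sub_mod_add_of_lt (hn : n ≠ 0) (hr : m % n ≠ 0)
    (hk : k < n - n % (m % n)) (q : ℕ) :
    airFill m n (m - m % n + q) k = decide (k % (m % n) = q) := by
  rw [airFill_sub_mod_add hn, airFill_of_lt_sub_mod hr hk]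

lemma airFill_sub_mod_add_of_le (hn : n ≠ 0) (hr : m % n ≠ 0)
    (hk : n - n % (m % n) ≤ k) (q : ℕ) :
    airFill m n (m - m % n + q) k =
      airFill (m % n) (n % (m % n)) q (k - (n - n % (m % n))) := by
  rw [airFill_sub_mod_add hn, ← Nat.add_sub_cancel' hk, airFill_sub_mod_add hr,
    Nat.add_sub_cancel_left]

end airFill

def IsUpGap (f : ℕ → Bool) (j g : ℕ) : Prop :=
  0 < g ∧ g ≤ j ∧ f (j - g) = true ∧ ∀ q, j - g < q → q < j → f q = false

lemma IsUpGap.add_left {f f' : ℕ → Bool} {j g : ℕ} (s : ℕ) (h : IsUpGap f j g)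
    (hf : ∀ q, f' (s + q) = f q) : IsUpGap f' (s + j) g := by
  obtain ⟨hg, hgj, hp, hbetween⟩ := h
  refine ⟨hg, by omega, ?_, fun q hq hqj => ?_⟩
  · rwa [show s + j - g = s + (j - g) by omega, hf]
  · rw [show q = s + (q - s) by omega, hf]
    exact hbetween _ (by omega) (by omega)

lemma dup_eq_of_isUpGap {K D j k g : ℕ} (h : IsUpGap (fun q => airFill K (D + 1) q k) j g) :
    dup K D j k = g := by
  obtain ⟨hg, hgj, hp, hbetween⟩ := h
  suffices ((Finset.range j).filter (fun q => airFill K (D + 1) q k = true)).sup id = j - g by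
    rw [dup, this]
    omega
  refine le_antisymm (Finset.sup_le fun q hq => ?_) (Finset.le_sup (f := id) ?_)
  · simp only [Finset.mem_filter, Finset.mem_range] at hq
    by_contra! hlt
    simp [hbetween q hlt hq.1] at hq
  · simpa using ⟨by omega, hp⟩

section evenBlock

variable {m n j k : ℕ}

lemma isUpGap_of_lt_sub_mod (hn : 0 < n) (hj : n ≤ j) (hjm : j < m - m % n)
    (h : airFill m n j k = true) : IsUpGap (fun q => airFill m n q k) j n := by
  rw [airFill_of_lt_sub_mod hn.ne' hjm, decide_eq_true_iff] at h
  refine ⟨hn, hj, ?_, fun q hq hqj => ?_⟩ <;> dsimp only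
  · rw [airFill_of_lt_sub_mod hn.ne' (by omega), ← h, ← Nat.mod_eq_sub_mod hj,
      decide_eq_true_iff]
  · rw [airFill_of_lt_sub_mod hn.ne' (by omega), ← h, decide_eq_false_iff_not]
    exact Nat.mod_ne_of_lt_of_lt_add (by omega) (by omega) ∘ Eq.symm

lemma isUpGap_of_mem_firstEvenBlock {c d : ℕ} (hn : 0 < n) (hnm : n ≤ m) (hd : d < m % n)
    (hcd : k = c * (m % n) + d) (hk : k + n % (m % n) < n) (hj : m - m % n ≤ j)
    (h : airFill m n j k = true) :
    IsUpGap (fun q => airFill m n q k) j (n - c * (m % n)) := by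
  obtain ⟨q, rfl⟩ : ∃ q, j = m - m % n + q := ⟨j - (m - m % n), by omega⟩
  have hkr : k % (m % n) = d := by rw [hcd, Nat.mul_add_mod_of_lt hd]
  rw [airFill_sub_mod_add_of_lt hn.ne' (by omega) (by omega), decide_eq_true_iff, hkr] at h
  subst h
  have hnm' : n ≤ m - m % n := Nat.le_sub_mod_of_le hnm
  -- the nearest one above is that of column `k` in the last identity block
  have hmod : (m - m % n - n + k) % n = k := by
    obtain ⟨t, ht⟩ := Nat.dvd_sub_mod (n := n) m
    rw [ht, show n * t - n + k = (t - 1) * n + k by rw [Nat.sub_one_mul, Nat.mul_comm],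
      Nat.mul_add_mod_of_lt (by omega)]
  refine ⟨by omega, by omega, ?_, fun q hq hqj => ?_⟩ <;> dsimp only
  · rw [show m - m % n + d - (n - c * (m % n)) = m - m % n - n + k by omega,
      airFill_of_lt_sub_mod hn.ne' (by omega), hmod, decide_eq_true_iff]
  · rcases lt_or_ge q (m - m % n) with hq' | hq'
    · rw [airFill_of_lt_sub_mod hn.ne' hq', decide_eq_false_iff_not, ← hmod]
      exact Nat.mod_ne_of_lt_of_lt_add (by omega) (by omega)
    · rw [show q = m - m % n + (q - (m - m % n)) by omega,
        airFill_sub_mod_add_of_lt hn.ne' (by omega) (by omega), hkr, decide_eq_false_iff_not]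
      omega

end evenBlock

-- Two unfoldings of `airFill` (each one a transposition) map the even block `i + 1` of the
-- `m × n` matrix onto the even block `i` of its `(m % n) × (n % (m % n))` corner.
lemma isUpGap_of_mem_evenBlock_of_eq (i : ℕ) :
    ∀ {m n j k c d : ℕ}, 0 < n → n ≤ m → d < remSeq n (m % n) (2 * i + 1) →
      k = n - remSeq n (m % n) (2 * i) + c * remSeq n (m % n) (2 * i + 1) + d →
      k + remSeq n (m % n) (2 * i + 2) < n → m - remSeq n (m % n) (2 * i + 1) ≤ j →
      airFill m n j k = true →
      IsUpGap (fun q => airFill m n q k) j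
        (remSeq n (m % n) (2 * i) - c * remSeq n (m % n) (2 * i + 1)) := by
  induction i with
  | zero =>
    intro m n j k c d hn hnm hd hk hkn hj h
    simp only [remSeq, Nat.zero_add, Nat.sub_self] at hd hk hkn hj ⊢
    simp only [show m % n ≠ 0 by omega, if_false] at hkn
    exact isUpGap_of_mem_firstEvenBlock hn hnm hd (by omega) hkn hj h
  | succ i ih =>
    intro m n j k c d hn hnm hd hk hkn hj h
    rw [show 2 * (i + 1) + 1 = 2 * i + 3 by ring, show 2 * (i + 1) + 2 = 2 * i + 4 by ring,
      show 2 * (i + 1) = 2 * i + 2 by ring] at *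
    have h31 : remSeq n (m % n) (2 * i + 3) ≤ m % n := remSeq_le_of_le le_rfl (by omega)
    have h32 : remSeq n (m % n) (2 * i + 3) ≤ remSeq n (m % n) 2 :=
      remSeq_le_of_le (by omega) (by omega)
    have h22 : remSeq n (m % n) (2 * i + 2) ≤ remSeq n (m % n) 2 :=
      remSeq_le_of_le (by omega) (by omega)
    have hr : m % n ≠ 0 := by omega
    rw [remSeq_two hr] at h32 h22
    have hs : n % (m % n) ≠ 0 := by omega
    have hshift (t : ℕ) : remSeq (n % (m % n)) (m % n % (n % (m % n))) t =
        remSeq n (m % n) (t + 2) := by rw [remSeq_mod hs, remSeq_mod hr]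
    have hsr : n % (m % n) < m % n := Nat.mod_lt _ (by omega)
    have hrn : m % n < n := Nat.mod_lt _ hn
    obtain ⟨q, rfl⟩ : ∃ q, j = m - m % n + q := ⟨j - (m - m % n), by omega⟩
    have hcorner := airFill_sub_mod_add_of_le (k := k) hn.ne' hr (by omega)
    have hinner := ih (m := m % n) (n := n % (m % n)) (j := q) (k := k - (n - n % (m % n)))
      (c := c) (d := d) (by omega) hsr.le
    simp only [hshift, Nat.add_assoc, Nat.reduceAdd] at hinner
    exact (hinner hd (by omega) (by omega) (by omega) (hcorner q ▸ h)).add_left _ hcorner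

theorem isUpGap_of_mem_evenBlock {m n i j k c d : ℕ} (hn : 0 < n) (hnm : n ≤ m)
    (hrow : m - remSeq n (m % n) (2 * i + 1) ≤ j)
    (hcol1 : n - remSeq n (m % n) (2 * i) ≤ k) (hcol2 : k + remSeq n (m % n) (2 * i + 2) < n)
    (hkR : k % (n - remSeq n (m % n) (2 * i)) = c * remSeq n (m % n) (2 * i + 1) + d)
    (hd : d < remSeq n (m % n) (2 * i + 1)) (h : airFill m n j k = true) :
    IsUpGap (fun q => airFill m n q k) j
      (remSeq n (m % n) (2 * i) - c * remSeq n (m % n) (2 * i + 1)) := by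
  rw [mod_sub_remSeq_eq_sub (Nat.mod_lt m hn).le i (by omega) hcol1] at hkR
  exact isUpGap_of_mem_evenBlock_of_eq i hn hnm hd (by omega) hcol2 hrow h

section lam

variable {K D : ℕ}

lemma lam_le_of_le {s t : ℕ} (hs : 1 ≤ s) (hst : s ≤ t) : lam K D t ≤ lam K D s := by
  simpa only [lam_eq_remSeq] using remSeq_le_of_le hs hst

lemma lam_eq_remSeq_mod (hK : D + 1 ≤ K) (hK' : K < 2 * (D + 1)) (t : ℕ) :
    lam K D t = remSeq (D + 1) (K % (D + 1)) t := by
  rw [lam_eq_remSeq, Nat.mod_eq_sub_mod hK, Nat.mod_eq_of_lt (by omega), Nat.sub_sub]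

lemma lam_add_two_eq_remSeq_mod (hK : 2 * (D + 1) < K) (t : ℕ) :
    lam K D (t + 2) = remSeq (D + 1) (K % (D + 1)) t := by
  have hmod : (D + 1) % (K - D - 1) = D + 1 := Nat.mod_eq_of_lt (by omega)
  rw [lam_eq_remSeq, ← remSeq_mod (by omega), hmod, ← remSeq_mod (by omega), Nat.sub_sub,
    ← Nat.mod_eq_sub_mod (by omega)]

lemma two_mul_lt_of_lam_ne_zero {t : ℕ} (hK : 2 * (D + 1) ≤ K) (ht : 2 ≤ t)
    (h : lam K D t ≠ 0) : 2 * (D + 1) < K := by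
  refine hK.lt_of_ne fun hK2 => h ?_
  have hlam2 : lam K D 2 = 0 := by
    rw [lam_eq_remSeq, remSeq_two (by omega), ← hK2, show 2 * (D + 1) - D - 1 = D + 1 by omega,
      Nat.mod_self]
  have := lam_le_of_le (K := K) (D := D) (by omega) ht
  omega

lemma isUpGap_of_two_mul_le {j k : ℕ} (hK : 2 * (D + 1) ≤ K) (hj : D + 1 ≤ j)
    (hk : k ≤ D - lam K D 2) (h : airFill K (D + 1) j k = true) :
    IsUpGap (fun q => airFill K (D + 1) q k) j (D + 1) := by
  rcases lt_or_ge j (K - K % (D + 1)) with hjK | hjK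
  · exact isUpGap_of_lt_sub_mod (by omega) hj hjK h
  obtain ⟨q, rfl⟩ : ∃ q, j = K - K % (D + 1) + q := ⟨j - (K - K % (D + 1)), by omega⟩
  have hr : K % (D + 1) ≠ 0 := by
    rintro hr
    rw [airFill_sub_mod_add (by omega), hr, airFill] at h
    simp at h
  have hK' : 2 * (D + 1) < K := by
    refine hK.lt_of_ne fun hK2 => hr ?_
    rw [← hK2, Nat.mul_mod_left]
  -- when `D + 1 < K - D - 1` the block `i = 0` is empty: `k ≤ D - lam K D 2` forces `k = 0`
  have hk0 : k = 0 := by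
    rw [lam_eq_remSeq, remSeq_two (by omega), Nat.mod_eq_of_lt (by omega)] at hk
    omega
  subst hk0
  have hmod := Nat.mod_lt (D + 1) (Nat.pos_of_ne_zero hr)
  have hrD := Nat.mod_lt K (by omega : 0 < D + 1)
  simpa using isUpGap_of_mem_firstEvenBlock (m := K) (n := D + 1) (k := 0) (c := 0)
    (by omega) (by omega) (Nat.pos_of_ne_zero hr) (by simp) (by omega) hjK h

end lam

theorem stmt8_general (K D i j k c d : ℕ)
    (hrow1 : K - lam K D (2*i+1) ≤ j)
    (hcol1 : D + 1 - lam K D (2*i) ≤ k) (hcol2 : k ≤ D - lam K D (2*i+2))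
    (hkR : k % (D + 1 - lam K D (2*i)) = c * lam K D (2*i+1) + d)
    (hd : d < lam K D (2*i+1))
    (hjk : airFill K (D+1) j k = true) :
    dup K D j k = lam K D (2*i) - c * lam K D (2*i+1) := by
  apply dup_eq_of_isUpGap
  have hlam1 : lam K D (2 * i + 1) ≤ K - D - 1 := lam_le_of_le le_rfl (by omega)
  rcases lt_or_ge K (2 * (D + 1)) with hK | hK
  · have hlam2 : lam K D (2 * i + 2) ≤ K - D - 1 := lam_le_of_le le_rfl (by omega)
    simp only [lam_eq_remSeq_mod (by omega) hK] at *
    exact isUpGap_of_mem_evenBlock (by omega) (by omega) hrow1 hcol1 (by omega) hkR hd hjk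
  rcases i with _ | i
  · simp only [Nat.mul_zero, Nat.zero_add, show lam K D 0 = D + 1 from rfl,
      show lam K D 1 = K - D - 1 from rfl, Nat.sub_self, Nat.mod_zero] at *
    obtain rfl : c = 0 := by
      by_contra hc
      have := Nat.le_mul_of_pos_left (K - D - 1) (Nat.pos_of_ne_zero hc)
      omega
    simpa using isUpGap_of_two_mul_le hK (by omega) hcol2 hjk
  · rw [show 2 * (i + 1) + 1 = 2 * i + 1 + 2 by ring, show 2 * (i + 1) + 2 = 2 * i + 2 + 2 by ring,
      show 2 * (i + 1) = 2 * i + 2 by ring] at *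
    have hK' : 2 * (D + 1) < K :=
      two_mul_lt_of_lam_ne_zero (t := 2 * i + 1 + 2) hK (by omega) (by omega)
    simp only [lam_add_two_eq_remSeq_mod hK'] at *
    have hrem : remSeq (D + 1) (K % (D + 1)) (2 * i + 2) ≤ K % (D + 1) :=
      remSeq_le_of_le le_rfl (by omega)
    have := Nat.mod_lt K (by omega : 0 < D + 1)
    exact isUpGap_of_mem_evenBlock (by omega) (by omega) hrow1 hcol1 (by omega) hkR hd hjk

/-- Up-distance in an even ('tall') submatrix `I_{λ_{2i} × β_{2i}λ_{2i}}`
(rows `[K - λ_{2i}, K - 1]`, columns `[D + 1 - λ_{2i-1}, D - λ_{2i+1}]`):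
if `L(j,k) = 1` there (with `j ≥ D+1`) and the within-block column index
`k_R = k mod (D+1-λ_{2i-1})` equals `c·λ_{2i} + d` with `d < λ_{2i}`, then
`d_up(j,k) = λ_{2i-1} - c·λ_{2i}`. -/
theorem stmt8 (K D l i j k c d : ℕ) (hDK : D + 1 < K)
    (hl : lam K D (l + 1) ≠ 0) (hl' : lam K D (l + 2) = 0)
    (heven : 2*i ≤ l)
    (hrow1 : K - lam K D (2*i+1) ≤ j) (hrow2 : j < K)
    (hcol1 : D + 1 - lam K D (2*i) ≤ k) (hcol2 : k ≤ D - lam K D (2*i+2))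
    (hkR : k % (D + 1 - lam K D (2*i)) = c * lam K D (2*i+1) + d)
    (hd : d < lam K D (2*i+1))
    (hj : D + 1 ≤ j)
    (hjk : airFill K (D+1) j k = true) :
    dup K D j k = lam K D (2*i) - c * lam K D (2*i+1) :=
  stmt8_general K D i j k c d hrow1 hcol1 hcol2 hkR hd hjk
end

section
/- The broadcast rate β(G) of the symmetric neighboring interference single unicast index coding problem with K messages, D interfering messages after and U = gcd(K, D+1) − 1 interfering messages before the desired message is exactly D+1; equivalently, the capacity is 1/(D+1). -/
/-!
Converse: on messages supported on `0, …, D`, receiver `k ≤ D` knows every later message of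
that block, so the block can be decoded backwards from the code, which therefore needs at least
`(D + 1) t` bits.

Achievability, over a field with at least `K` elements instead of the binary AIR matrix: with
`G = gcd(K, D + 1)` and `D + 1 = G b`, send for every residue class `c` mod `G` and every `l < b`
the sum `∑_{q ≡ c} α_q ^ l x_q`, with distinct `α_q`. The backward interference (`U < G`) lies in
other classes, and the forward interference of receiver `k` inside its own class is
`k + G, …, k + (b - 1) G`, so receiver `k` faces an invertible `b × b` Vandermonde system.
-/

def SNISideInfo (K D U : ℕ) (k j : ZMod K) : Prop :=
  j ≠ k ∧ (∀ m : ℕ, 1 ≤ m → m ≤ D → j ≠ k + (m : ZMod K)) ∧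
    (∀ m : ℕ, 1 ≤ m → m ≤ U → j ≠ k - (m : ZMod K))

def IsSNIIndexCode (K D U : ℕ) {A B : Type*} (E : (ZMod K → A) → B) : Prop :=
  ∀ k : ZMod K, ∀ x y : ZMod K → A, E x = E y →
    (∀ j, SNISideInfo K D U k j → x j = y j) → x k = y k

namespace IsSNIIndexCode

variable {K D U : ℕ} {A B : Type*} {E : (ZMod K → A) → B}

theorem comp_injective {A' B' : Type*} (hE : IsSNIIndexCode K D U E) {f : A' → A}
    (hf : Function.Injective f) {g : B → B'} (hg : Function.Injective g) :
    IsSNIIndexCode K D U (fun x => g (E (f ∘ x))) :=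
  fun k x y hxy hside => hf <| hE k (f ∘ x) (f ∘ y) (hg hxy) fun j hj => congrArg f (hside j hj)

end IsSNIIndexCode

theorem SNISideInfo.val_lt {K D U : ℕ} [NeZero K] {k j : ZMod K} (h : SNISideInfo K D U k j)
    (hj : j.val ≤ D) : j.val < k.val := by
  by_contra! hkj
  rcases hkj.eq_or_lt with hval | hlt
  · exact h.1 (ZMod.val_injective K hval.symm)
  · refine h.2.1 (j.val - k.val) (by omega) (by omega) ?_
    rw [Nat.cast_sub hkj, ZMod.natCast_zmod_val, ZMod.natCast_zmod_val, add_sub_cancel]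

theorem IsSNIIndexCode.card_pow_le {K D U : ℕ} [NeZero K] (hDK : D + 1 ≤ K) {A B : Type*}
    [Fintype A] [Inhabited A] [Fintype B] {E : (ZMod K → A) → B}
    (hE : IsSNIIndexCode K D U E) : Fintype.card A ^ (D + 1) ≤ Fintype.card B := by
  let pad : (Fin (D + 1) → A) → (ZMod K → A) :=
    fun u q => if h : q.val < D + 1 then u ⟨q.val, h⟩ else default
  have hinj : Function.Injective (E ∘ pad) := by
    intro u v huv
    have hpad : ∀ n (q : ZMod K), q.val = n → pad u q = pad v q := by
      intro n
      induction n using Nat.strong_induction_on with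
      | _ n ih =>
        rintro q rfl
        by_cases hq : q.val < D + 1
        · refine hE q _ _ huv fun j hj => ?_
          by_cases hjD : j.val < D + 1
          · exact ih j.val (hj.val_lt (by omega)) j rfl
          · simp only [pad, dif_neg hjD]
        · simp only [pad, dif_neg hq]
    funext i
    have := hpad i.val (i.val : ZMod K) (ZMod.val_cast_of_lt (by omega))
    simpa only [pad, ZMod.val_cast_of_lt (show i.val < K by omega), dif_pos i.isLt] using this
  simpa using Fintype.card_le_of_injective _ hinj

theorem IsSNIIndexCode.mul_le {K D U t N : ℕ} [NeZero K] (hDK : D + 1 ≤ K)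
    {E : (ZMod K → Fin t → Bool) → (Fin N → Bool)} (hE : IsSNIIndexCode K D U E) :
    (D + 1) * t ≤ N := by
  have h := hE.card_pow_le hDK
  simp only [Fintype.card_fun, Fintype.card_bool, Fintype.card_fin, ← pow_mul] at h
  rw [mul_comm]
  exact (Nat.pow_le_pow_iff_right (by norm_num)).mp h

theorem eq_zero_of_sum_mul_pow_eq_zero {R : Type*} [CommRing R] [IsDomain R] {n : ℕ}
    {v : Fin n → R} (hv : Function.Injective v) {c : Fin n → R}
    (h : ∀ l : Fin n, ∑ j, c j * v j ^ (l : ℕ) = 0) : c = 0 :=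
  Matrix.eq_zero_of_vecMul_eq_zero (Matrix.det_vandermonde_ne_zero_iff.mpr hv) (funext h)

section Window

variable {K G : ℕ} (hGK : G ∣ K)

local notation "res" => ZMod.castHom hGK (ZMod G)

theorem dvd_of_castHom_add_eq (k : ZMod K) {m : ℕ} (h : res (k + m) = res k) : G ∣ m := by
  rwa [map_add, map_natCast, add_eq_left, ZMod.natCast_eq_zero_iff] at h

theorem exists_eq_add_of_not_sideInfo {D U b : ℕ} (hb : G * b = D + 1) (hU : U < G)
    {k q : ZMod K} (hres : res q = res k) (hq : ¬ SNISideInfo K D U k q) :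
    ∃ j : Fin b, k + ((G * j : ℕ) : ZMod K) = q := by
  by_contra! hne
  refine hq ⟨fun hqk => hne ⟨0, ?_⟩ (by simp [hqk]), fun m hm1 hmD hqm => ?_,
    fun m hm1 hmU hqm => ?_⟩
  · exact Nat.pos_of_ne_zero (by rintro rfl; omega)
  · obtain ⟨j, rfl⟩ := dvd_of_castHom_add_eq hGK k (hqm ▸ hres)
    exact hne ⟨j, by nlinarith⟩ hqm.symm
  · have hsub : res (k - m + m) = res (k - m) := by rw [sub_add_cancel, ← hqm, hres]
    have := Nat.le_of_dvd hm1 (dvd_of_castHom_add_eq hGK _ hsub)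
    omega

end Window

theorem add_natCast_mul_injective {K G b : ℕ} (hG : 0 < G) (hbK : G * b ≤ K) (k : ZMod K) :
    Function.Injective fun j : Fin b => k + ((G * j : ℕ) : ZMod K) := by
  intro i j hij
  have h := (ZMod.natCast_eq_natCast_iff' _ _ K).mp (add_left_cancel hij)
  rw [Nat.mod_eq_of_lt (by nlinarith [i.isLt]), Nat.mod_eq_of_lt (by nlinarith [j.isLt])] at h
  exact Fin.ext (Nat.eq_of_mul_eq_mul_left hG h)

noncomputable def interleavedCode {F : Type*} [Field F] {K G : ℕ} [NeZero K] (b : ℕ)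
    (hGK : G ∣ K) (α : ZMod K → F) (x : ZMod K → F) : ZMod G × Fin b → F :=
  fun i => ∑ q, (if ZMod.castHom hGK (ZMod G) q = i.1 then α q ^ (i.2 : ℕ) else 0) * x q

theorem isSNIIndexCode_interleavedCode {F : Type*} [Field F] {K G D U b : ℕ} [NeZero K]
    (hGK : G ∣ K) (hb : G * b = D + 1) (hDK : D + 1 ≤ K) (hU : U < G) {α : ZMod K → F}
    (hα : Function.Injective α) : IsSNIIndexCode K D U (interleavedCode b hGK α) := by
  intro k x y hxy hside
  set w := fun j : Fin b => k + ((G * j : ℕ) : ZMod K)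
  have hG : 0 < G := Nat.pos_of_ne_zero (by rintro rfl; omega)
  have hw := add_natCast_mul_injective hG (hb ▸ hDK) k
  have hrow : ∀ l : Fin b, ∑ j, (x (w j) - y (w j)) * α (w j) ^ (l : ℕ) = 0 := by
    intro l
    have h := congrFun hxy (ZMod.castHom hGK (ZMod G) k, l)
    simp only [interleavedCode] at h
    rw [← sub_eq_zero, ← Finset.sum_sub_distrib] at h
    rw [← h, ← Finset.sum_subset (Finset.subset_univ (Finset.univ.image w)),
      Finset.sum_image hw.injOn]
    · refine Finset.sum_congr rfl fun j _ => ?_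
      have hres : ZMod.castHom hGK (ZMod G) (w j) = ZMod.castHom hGK (ZMod G) k := by
        have hGj : ((G * j : ℕ) : ZMod G) = 0 := by simp
        simp only [w, map_add, map_natCast, hGj, add_zero]
      rw [if_pos hres]
      ring
    · intro q _ hqw
      by_cases hres : ZMod.castHom hGK (ZMod G) q = ZMod.castHom hGK (ZMod G) k
      · have hknown : SNISideInfo K D U k q := by
          by_contra hq
          obtain ⟨j, hj⟩ := exists_eq_add_of_not_sideInfo hGK hb hU hres hq
          exact hqw (Finset.mem_image.mpr ⟨j, Finset.mem_univ _, hj⟩)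
        rw [hside q hknown, sub_self]
      · simp only [if_neg hres, zero_mul, sub_self]
  have hb0 : 0 < b := Nat.pos_of_ne_zero (by rintro rfl; omega)
  have := congrFun (eq_zero_of_sum_mul_pow_eq_zero (hα.comp hw) hrow) ⟨0, hb0⟩
  simpa [w, sub_eq_zero] using this

theorem exists_isSNIIndexCode_bits {K D U : ℕ} [NeZero K] (hDK : D + 1 ≤ K)
    (hU : U < K.gcd (D + 1)) :
    ∃ E : (ZMod K → Fin K → Bool) → (Fin ((D + 1) * K) → Bool), IsSNIIndexCode K D U E := by
  set G := K.gcd (D + 1)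
  obtain ⟨b, hb⟩ : G ∣ D + 1 := Nat.gcd_dvd_right K (D + 1)
  have : NeZero G := ⟨by omega⟩
  let _ : Fintype (GaloisField 2 K) := Fintype.ofFinite _
  have hF : Fintype.card (GaloisField 2 K) = 2 ^ K := by
    rw [Fintype.card_eq_nat_card]
    exact GaloisField.card 2 K (NeZero.ne K)
  obtain ⟨α⟩ : Nonempty (ZMod K ↪ GaloisField 2 K) :=
    Function.Embedding.nonempty_of_card_le (by rw [ZMod.card, hF]; exact Nat.lt_two_pow_self.le)
  let eA : (Fin K → Bool) ≃ GaloisField 2 K := Fintype.equivOfCardEq (by simp [hF])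
  let eB : (ZMod G × Fin b → GaloisField 2 K) ≃ (Fin ((D + 1) * K) → Bool) :=
    Fintype.equivOfCardEq (by simp [hF, ZMod.card, ← pow_mul, hb, mul_comm])
  exact ⟨_, (isSNIIndexCode_interleavedCode (Nat.gcd_dvd_left K (D + 1)) hb.symm hDK hU
    α.injective).comp_injective eA.injective eB.injective⟩

/-- The broadcast rate of the SNI-SUICP with `K` messages, `D` interfering messages after
and `U = gcd(K, D+1) - 1` interfering messages before the desired message is exactly `D+1`
(equivalently, the capacity is `1/(D+1)`): `D+1` is the greatest lower bound of the
achievable normalized lengths `N/t` of valid index codes on `t`-bit messages.  A code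
`E` is valid iff every receiver `k` can decode `x_k` from `E(x)` and its side-information
(all messages except `x_k` and the interference). -/
theorem stmt15 (K D U : ℕ) (hK : 0 < K) (hDK : D + 1 ≤ K)
    (hU : U = Nat.gcd K (D + 1) - 1) :
    IsGLB { r : ℝ | ∃ (t N : ℕ) (E : (ZMod K → (Fin t → Bool)) → (Fin N → Bool)),
      0 < t ∧ r = (N : ℝ) / (t : ℝ) ∧
      ∀ k : ZMod K, ∀ x y : ZMod K → (Fin t → Bool), E x = E y →
        (∀ j : ZMod K,
          (j ≠ k ∧ (∀ m : ℕ, 1 ≤ m → m ≤ D → j ≠ k + (m : ZMod K)) ∧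
            (∀ m : ℕ, 1 ≤ m → m ≤ U → j ≠ k - (m : ZMod K))) → x j = y j) →
        x k = y k } ((D : ℝ) + 1) := by
  have : NeZero K := ⟨hK.ne'⟩
  have hUG : U < K.gcd (D + 1) := by
    have := Nat.gcd_pos_of_pos_left (D + 1) hK
    omega
  obtain ⟨E, hE⟩ := exists_isSNIIndexCode_bits hDK hUG
  refine IsLeast.isGLB ⟨⟨K, (D + 1) * K, E, hK, ?_, hE⟩, ?_⟩
  · push_cast
    field_simp
  · rintro r ⟨t, N, E', ht, rfl, hE'⟩
    rw [le_div_iff₀ (by exact_mod_cast ht)]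
    exact_mod_cast IsSNIIndexCode.mul_le hDK hE'
end

section
/- Achievability: the K × (D+1) AIR matrix L is a valid scalar linear encoding matrix for the SNI-SUICP with U = gcd(K, D+1) − 1; i.e., for the code [c_0,…,c_D] = [x_0,…,x_{K−1}]·L over any field, every receiver R_k (k ∈ [0, K−1]) can recover x_k as a linear combination of code symbols and side-information symbols. Equivalently, for each k there is a vector u in the column span of L such that u_k = 1 and u_j = 0 for every j ∈ {k−U,…,k−1} ∪ {k+1,…,k+D} (indices mod K). -/
lemma airFill_top {m n j c : ℕ} (hn : 0 < n) (hj : j < m - m % n) :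
    airFill m n j c = decide (j % n = c) := by
  rw [airFill]; simp [hn.ne', hj]

lemma airFill_bot {m n j c : ℕ} (hn : 0 < n) (hj : ¬ j < m - m % n) :
    airFill m n j c = airFill n (m % n) c (j - (m - m % n)) := by
  rw [airFill]; simp [hn.ne', hj]

lemma airFill_id {n r c t : ℕ} (hr : 0 < r) (hrn : r ≤ n) (hc : c < r) :
    airFill n r c t = decide (c = t) := by
  have h1 : r * 1 ≤ r * (n / r) := Nat.mul_le_mul_left r (Nat.div_pos hrn hr)
  have h2 : r * (n / r) + n % r = n := Nat.div_add_mod n r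
  have h3 : n % r < r := Nat.mod_lt _ hr
  rw [airFill_top hr (by omega)]
  rw [Nat.mod_eq_of_lt hc]

lemma airFill_cong : ∀ n m j c : ℕ, j < m → c < n → airFill m n j c = true →
    j % Nat.gcd m n = c % Nat.gcd m n := by
  intro n
  induction n using Nat.strong_induction_on with
  | _ n IH =>
    intro m j c hj hc hA
    have hn : 0 < n := by omega
    by_cases htop : j < m - m % n
    · rw [airFill_top hn htop] at hA
      have : j % n = c := by simpa using hA
      have hdvd : Nat.gcd m n ∣ n := Nat.gcd_dvd_right m n
      rw [← this, Nat.mod_mod_of_dvd _ hdvd]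
    · have hr : 0 < m % n := by
        rcases Nat.eq_zero_or_pos (m % n) with h | h
        · exfalso; exact htop (by omega)
        · exact h
      rw [airFill_bot hn htop] at hA
      have hg : Nat.gcd n (m % n) = Nat.gcd m n := by
        rw [Nat.gcd_comm m n, Nat.gcd_rec n m]
        rw [Nat.gcd_comm]
      have h4 := IH (m % n) (Nat.mod_lt _ hn) n c (j - (m - m % n)) hc (by omega) hA
      rw [hg] at h4
      have hdvdT : Nat.gcd m n ∣ (m - m % n) := by
        have h1 : Nat.gcd m n ∣ m := Nat.gcd_dvd_left m n
        have h2 : Nat.gcd m n ∣ m % n := by rw [← hg]; exact Nat.gcd_dvd_right n (m % n)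
        exact Nat.dvd_sub h1 h2
      obtain ⟨t, ht⟩ := hdvdT
      have hTj : m - m % n ≤ j := by omega
      have : j % Nat.gcd m n = (j - (m - m % n)) % Nat.gcd m n := by
        conv_lhs => rw [show j = (j - (m - m % n)) + Nat.gcd m n * t by omega]
        rw [Nat.add_mul_mod_self_left]
      rw [this]; exact h4.symm

section SumTools
variable {F : Type*} [Field F]

lemma mod_shift {n k c : ℕ} (hn : 0 < n) (hc : c < n) :
    (k + (c + (n - k % n)) % n) % n = c := by
  rw [Nat.add_mod, Nat.mod_mod_of_dvd _ dvd_rfl, ← Nat.add_mod]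
  have h1 : k % n < n := Nat.mod_lt _ hn
  have h3 := Nat.div_add_mod k n
  rw [show k + (c + (n - k % n)) = (c + n) + n * (k / n) by omega,
    Nat.add_mul_mod_self_left, Nat.add_mod_right, Nat.mod_eq_of_lt hc]

/-- collapse a sum against a top (identity) row of the AIR matrix -/
lemma sum_top {m n : ℕ} (hn : 0 < n) {j : ℕ} (hj : j < m - m % n) (v : Fin n → F) :
    (∑ c : Fin n, (if airFill m n j c.val = true then (1:F) else 0) * v c)
      = v ⟨j % n, Nat.mod_lt _ hn⟩ := by
  rw [Finset.sum_eq_single (⟨j % n, Nat.mod_lt _ hn⟩ : Fin n)]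
  · rw [airFill_top hn hj]; simp
  · intro c _ hc
    rw [airFill_top hn hj]
    have : ¬ (j % n = c.val) := by
      intro h; exact hc (Fin.ext h.symm)
    simp [this]
  · intro h; exact absurd (Finset.mem_univ _) h

lemma sum_bot {m n : ℕ} (hn : 0 < n) {j : ℕ} (hj : ¬ j < m - m % n) (v : Fin n → F) :
    (∑ c : Fin n, (if airFill m n j c.val = true then (1:F) else 0) * v c)
      = ∑ c : Fin n, (if airFill n (m % n) c.val (j - (m - m % n)) = true then (1:F) else 0) * v c :=
  Finset.sum_congr rfl fun c _ => by rw [airFill_bot hn hj]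

lemma split_sum {r s t0 : ℕ} (h : r = s + t0) (g : ℕ → F) :
    ∑ i : Fin r, g i.val = (∑ i : Fin s, g i.val) + ∑ i : Fin t0, g (s + i.val) := by
  subst h
  rw [Fin.sum_univ_add]
  congr 1

lemma sum_support {n s lo : ℕ} (h : lo + s ≤ n) (g : ℕ → F)
    (hz : ∀ a, a < n → (a < lo ∨ lo + s ≤ a) → g a = 0) :
    ∑ c : Fin n, g c.val = ∑ i : Fin s, g (lo + i.val) := by
  rw [split_sum (show n = lo + (s + (n - lo - s)) by omega) g,
    split_sum (rfl : s + (n - lo - s) = s + (n - lo - s)) (fun a => g (lo + a))]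
  have e1 : ∑ i : Fin lo, g i.val = 0 :=
    Finset.sum_eq_zero fun i _ => hz i.val (by omega) (Or.inl i.isLt)
  have e2 : ∑ i : Fin (n - lo - s), g (lo + (s + i.val)) = 0 :=
    Finset.sum_eq_zero fun i _ => hz _ (by omega) (Or.inr (by omega))
  rw [e1, e2, zero_add, add_zero]

end SumTools

section LemA
variable (F : Type*) [Field F]

def Wmat (m n k : ℕ) : Matrix (Fin n) (Fin n) F :=
  Matrix.of fun i c => if airFill m n ((k + i.val) % m) c.val = true then 1 else 0

lemma lemA : ∀ n m k : ℕ, 0 < n → n ≤ m → k < m → IsUnit (Wmat F m n k) := by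
  intro n
  induction n using Nat.strong_induction_on with
  | _ n IH =>
  intro m k hn hnm hk
  have hm : 0 < m := lt_of_lt_of_le hn hnm
  rw [← Matrix.mulVec_injective_iff_isUnit]
  have key : ∀ v : Fin n → F, (Wmat F m n k).mulVec v = 0 → v = 0 := by
    intro v hv
    set w : ℕ → F := fun a => if h : a < n then v ⟨a, h⟩ else 0 with hwd
    have hveq : ∀ i : Fin n,
        (∑ c : Fin n, (if airFill m n ((k + i.val) % m) c.val = true then (1:F) else 0) * v c)
          = 0 := by
      intro i
      have h0 := congrFun hv i
      simpa [Wmat, Matrix.mulVec, dotProduct] using h0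
    have hwv : ∀ c : Fin n, w c.val = v c := by
      intro c; simp [hwd, c.isLt]
    have htop : ∀ i : Fin n, ((k + i.val) % m < m - m % n) →
        w (((k + i.val) % m) % n) = 0 := by
      intro i hi
      have h1 := sum_top (m := m) hn hi v
      rw [hveq i] at h1
      exact (hwv ⟨((k + i.val) % m) % n, Nat.mod_lt _ hn⟩).trans h1.symm
    have hbot : ∀ i : Fin n, ¬((k + i.val) % m < m - m % n) →
        (∑ c : Fin n, (if airFill n (m % n) c.val (((k + i.val) % m) - (m - m % n)) = true
          then (1:F) else 0) * w c.val) = 0 := by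
      intro i hi
      have h1 := sum_bot (m := m) hn hi v
      rw [hveq i] at h1
      exact (Finset.sum_congr rfl fun c _ => by rw [hwv c]).trans h1.symm
    suffices hwz : ∀ a : ℕ, a < n → w a = 0 by
      funext c
      show v c = 0
      rw [← hwv c]; exact hwz c.val c.isLt
    by_cases hr0 : m % n = 0
    · -- stacked identities (possibly wrapping)
      have hdvd : n ∣ m := Nat.dvd_of_mod_eq_zero hr0
      intro a ha
      have hilt : (a + (n - k % n)) % n < n := Nat.mod_lt _ hn
      have h1 := htop ⟨_, hilt⟩ (show (k + (a + (n - k % n)) % n) % m < m - m % n by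
        have := Nat.mod_lt (k + (a + (n - k % n)) % n) hm
        omega)
      rwa [show ((k + (a + (n - k % n)) % n) % m) % n = a by
        rw [Nat.mod_mod_of_dvd _ hdvd]; exact mod_shift hn ha] at h1
    · have hr : 0 < m % n := Nat.pos_of_ne_zero hr0
      have hrn : m % n < n := Nat.mod_lt _ hn
      have hTq : m - m % n = n * (m / n) := by have := Nat.div_add_mod m n; omega
      have hq : 0 < m / n := Nat.div_pos hnm hn
      have hTsub : n * (m / n) = n * (m / n - 1) + n := by
        rw [← Nat.mul_succ]; congr 1; omega
      have hTn : n ≤ m - m % n := by omega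
      by_cases hkT : k < m - m % n
      · by_cases hα : k + n ≤ m - m % n
        · -- case α : window entirely inside top identities, no wrap
          intro a ha
          have hilt : (a + (n - k % n)) % n < n := Nat.mod_lt _ hn
          have h1 := htop ⟨_, hilt⟩ (show (k + (a + (n - k % n)) % n) % m < m - m % n by
            rw [Nat.mod_eq_of_lt (show k + (a + (n - k % n)) % n < m by omega)]; omega)
          rwa [show ((k + (a + (n - k % n)) % n) % m) % n = a by
            rw [Nat.mod_eq_of_lt (show k + (a + (n - k % n)) % n < m by omega)]
            exact mod_shift hn ha] at h1
        · -- k < T < k + n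
          have hb1 : 1 ≤ k + n - (m - m % n) := by omega
          have hbn : k + n - (m - m % n) < n := by omega
          have hkeq : k = (k + n - (m - m % n)) + n * (m / n - 1) := by omega
          have hz1 : ∀ a : ℕ, k + n - (m - m % n) ≤ a → w a = 0 := by
            intro a hab
            by_cases ha : a < n
            · have hilt : a - (k + n - (m - m % n)) < n := by omega
              have hrow : k + (a - (k + n - (m - m % n))) = a + n * (m / n - 1) := by omega
              have h1 := htop ⟨_, hilt⟩
                (show (k + (a - (k + n - (m - m % n)))) % m < m - m % n by
                  rw [Nat.mod_eq_of_lt (show k + (a - (k + n - (m - m % n))) < m by omega)]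
                  omega)
              rwa [show ((k + (a - (k + n - (m - m % n)))) % m) % n = a by
                rw [Nat.mod_eq_of_lt (show k + (a - (k + n - (m - m % n))) < m by omega),
                  hrow, Nat.add_mul_mod_self_left, Nat.mod_eq_of_lt ha]] at h1
            · simp [hwd, ha]
          by_cases hβ : k + n ≤ m
          · -- case β
            have hbr : k + n - (m - m % n) ≤ m % n := by omega
            have hz2 : ∀ a : ℕ, a < k + n - (m - m % n) → w a = 0 := by
              intro a hab
              have hilt : n - (k + n - (m - m % n)) + a < n := by omega
              have hrow : k + (n - (k + n - (m - m % n)) + a) = (m - m % n) + a := by omega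
              have hb := hbot ⟨_, hilt⟩
                (show ¬ ((k + (n - (k + n - (m - m % n)) + a)) % m < m - m % n) by
                  rw [Nat.mod_eq_of_lt (show k + (n - (k + n - (m - m % n)) + a) < m by omega)]
                  omega)
              rw [show ((k + (n - (k + n - (m - m % n)) + a)) % m) - (m - m % n) = a by
                rw [Nat.mod_eq_of_lt (show k + (n - (k + n - (m - m % n)) + a) < m by omega)]
                omega] at hb
              rw [Finset.sum_eq_single (⟨a, by omega⟩ : Fin n)] at hb
              · rw [airFill_id hr hrn.le (by omega : a < m % n)] at hb
                simpa using hb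
              · intro d _ hd
                by_cases hdb : d.val < k + n - (m - m % n)
                · rw [airFill_id hr hrn.le (by omega)]
                  have hne : ¬ (d.val = a) := fun h => hd (Fin.ext h)
                  simp [hne]
                · rw [hz1 d.val (by omega), mul_zero]
              · intro h; exact absurd (Finset.mem_univ _) h
            intro a ha
            by_cases hc : a < k + n - (m - m % n)
            · exact hz2 a hc
            · exact hz1 a (by omega)
          · -- case γ : window wraps past m
            have hbr : m % n < k + n - (m - m % n) := by omega
            have hz2 : ∀ a : ℕ, a < (k + n - (m - m % n)) - m % n → w a = 0 := by
              intro a hab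
              have hilt : n - (k + n - (m - m % n)) + m % n + a < n := by omega
              have hrow : k + (n - (k + n - (m - m % n)) + m % n + a) = m + a := by omega
              have h1 := htop ⟨_, hilt⟩
                (show (k + (n - (k + n - (m - m % n)) + m % n + a)) % m < m - m % n by
                  rw [hrow, Nat.add_mod_left, Nat.mod_eq_of_lt (show a < m by omega)]; omega)
              rwa [show ((k + (n - (k + n - (m - m % n)) + m % n + a)) % m) % n = a by
                rw [hrow, Nat.add_mod_left, Nat.mod_eq_of_lt (show a < m by omega),
                  Nat.mod_eq_of_lt (show a < n by omega)]] at h1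
            have hE : ∀ t : Fin (m % n), (∑ j : Fin (m % n),
                (if airFill n (m % n) ((k + n - (m - m % n)) - m % n + j.val) t.val = true
                  then (1:F) else 0) * w ((k + n - (m - m % n)) - m % n + j.val)) = 0 := by
              intro t
              have hilt : n - (k + n - (m - m % n)) + t.val < n := by have := t.isLt; omega
              have hrowlt : k + (n - (k + n - (m - m % n)) + t.val) < m := by
                have := t.isLt; omega
              have hb := hbot ⟨_, hilt⟩
                (show ¬ ((k + (n - (k + n - (m - m % n)) + t.val)) % m < m - m % n) by
                  rw [Nat.mod_eq_of_lt hrowlt]; omega)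
              rw [show ((k + (n - (k + n - (m - m % n)) + t.val)) % m) - (m - m % n) = t.val by
                rw [Nat.mod_eq_of_lt hrowlt]; omega] at hb
              rw [sum_support (show ((k + n - (m - m % n)) - m % n) + m % n ≤ n by omega)
                (fun a => (if airFill n (m % n) a t.val = true then (1:F) else 0) * w a)
                (by
                  intro a ha hcase
                  rcases hcase with h1 | h2
                  · simp only [hz2 a (by omega), mul_zero]
                  · simp only [hz1 a (by omega), mul_zero])] at hb
              exact hb
            have hIH := IH (m % n) hrn n ((k + n - (m - m % n)) - m % n) hr hrn.le (by omega)
            have hinj := Matrix.vecMul_injective_iff_isUnit.mpr hIH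
            have hw0 : (fun j : Fin (m % n) => w ((k + n - (m - m % n)) - m % n + j.val)) = 0 := by
              apply hinj
              simp only [Matrix.zero_vecMul]
              funext t
              show Matrix.vecMul _ _ t = 0
              simp only [Matrix.vecMul, dotProduct, Wmat, Matrix.of_apply]
              refine Eq.trans (Finset.sum_congr rfl fun j _ => ?_) (hE t)
              rw [Nat.mod_eq_of_lt (show (k + n - (m - m % n)) - m % n + j.val < n by
                have := j.isLt; omega)]
              exact mul_comm _ _
            intro a ha
            by_cases hc1 : a < (k + n - (m - m % n)) - m % n
            · exact hz2 a hc1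
            · by_cases hc2 : a < k + n - (m - m % n)
              · have h2 := congrFun hw0 ⟨a - ((k + n - (m - m % n)) - m % n), by omega⟩
                simp only [Pi.zero_apply] at h2
                rwa [show (k + n - (m - m % n)) - m % n +
                  (a - ((k + n - (m - m % n)) - m % n)) = a by omega] at h2
              · exact hz1 a (by omega)
      · -- case δ : k in the bottom block
        have ht0 : k - (m - m % n) < m % n := by omega
        have hs : 0 < m % n - (k - (m - m % n)) := by omega
        have hz1 : ∀ a : ℕ, a < n - (m % n - (k - (m - m % n))) → w a = 0 := by
          intro a hab
          have hilt : (m % n - (k - (m - m % n))) + a < n := by omega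
          have hrow : k + ((m % n - (k - (m - m % n))) + a) = m + a := by omega
          have h1 := htop ⟨_, hilt⟩
            (show (k + ((m % n - (k - (m - m % n))) + a)) % m < m - m % n by
              rw [hrow, Nat.add_mod_left, Nat.mod_eq_of_lt (show a < m by omega)]; omega)
          rwa [show ((k + ((m % n - (k - (m - m % n))) + a)) % m) % n = a by
            rw [hrow, Nat.add_mod_left, Nat.mod_eq_of_lt (show a < m by omega),
              Nat.mod_eq_of_lt (show a < n by omega)]] at h1
        have hE : ∀ u : ℕ, u < m % n - (k - (m - m % n)) →
            (∑ j : Fin (m % n - (k - (m - m % n))),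
            (if airFill n (m % n) (n - (m % n - (k - (m - m % n))) + j.val)
                ((k - (m - m % n)) + u) = true then (1:F) else 0) *
              w (n - (m % n - (k - (m - m % n))) + j.val)) = 0 := by
          intro u hu
          have hiu : u < n := by omega
          have hb := hbot ⟨u, hiu⟩
            (show ¬ ((k + u) % m < m - m % n) by
              rw [Nat.mod_eq_of_lt (show k + u < m by omega)]; omega)
          rw [show ((k + u) % m) - (m - m % n) = (k - (m - m % n)) + u by
            rw [Nat.mod_eq_of_lt (show k + u < m by omega)]; omega] at hb
          rw [sum_support (show (n - (m % n - (k - (m - m % n)))) +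
              (m % n - (k - (m - m % n))) ≤ n by omega)
            (fun a => (if airFill n (m % n) a ((k - (m - m % n)) + u) = true then (1:F) else 0)
              * w a)
            (by
              intro a ha hcase
              rcases hcase with h1 | h2
              · simp only [hz1 a (by omega), mul_zero]
              · exact absurd h2 (by omega))] at hb
          exact hb
        have hIH := IH (m % n) hrn n (n - (m % n - (k - (m - m % n)))) hr hrn.le (by omega)
        have hinj := Matrix.vecMul_injective_iff_isUnit.mpr hIH
        -- the extended coefficient vector x
        have hx0 : (fun i : Fin (m % n) =>
            if i.val < (m % n - (k - (m - m % n))) then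
              w (n - (m % n - (k - (m - m % n))) + i.val)
            else -(∑ j : Fin (m % n - (k - (m - m % n))),
              (if airFill n (m % n) (n - (m % n - (k - (m - m % n))) + j.val)
                (i.val - (m % n - (k - (m - m % n)))) = true then (1:F) else 0) *
              w (n - (m % n - (k - (m - m % n))) + j.val))) = 0 := by
          apply hinj
          simp only [Matrix.zero_vecMul]
          funext t
          show Matrix.vecMul _ _ t = 0
          simp only [Matrix.vecMul, dotProduct, Wmat, Matrix.of_apply]
          rw [split_sum (show m % n = (m % n - (k - (m - m % n))) + (k - (m - m % n)) by omega)
            (fun a => (if a < (m % n - (k - (m - m % n))) then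
              w (n - (m % n - (k - (m - m % n))) + a)
            else -(∑ j : Fin (m % n - (k - (m - m % n))),
              (if airFill n (m % n) (n - (m % n - (k - (m - m % n))) + j.val)
                (a - (m % n - (k - (m - m % n)))) = true then (1:F) else 0) *
              w (n - (m % n - (k - (m - m % n))) + j.val))) *
              (if airFill n (m % n) ((n - (m % n - (k - (m - m % n))) + a) % n) t.val = true
                then (1:F) else 0))]
          have hS1 : ∀ i : Fin (m % n - (k - (m - m % n))),
              (if (i.val : ℕ) < (m % n - (k - (m - m % n))) then
                w (n - (m % n - (k - (m - m % n))) + i.val)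
              else -(∑ j : Fin (m % n - (k - (m - m % n))),
                (if airFill n (m % n) (n - (m % n - (k - (m - m % n))) + j.val)
                  (i.val - (m % n - (k - (m - m % n)))) = true then (1:F) else 0) *
                w (n - (m % n - (k - (m - m % n))) + j.val))) *
                (if airFill n (m % n) ((n - (m % n - (k - (m - m % n))) + i.val) % n) t.val = true
                  then (1:F) else 0)
              = (if airFill n (m % n) (n - (m % n - (k - (m - m % n))) + i.val) t.val = true
                  then (1:F) else 0) * w (n - (m % n - (k - (m - m % n))) + i.val) := by
            intro i
            rw [if_pos i.isLt,
              Nat.mod_eq_of_lt (show n - (m % n - (k - (m - m % n))) + i.val < n by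
                have := i.isLt; omega)]
            exact mul_comm _ _
          have hS2 : ∀ i : Fin (k - (m - m % n)),
              (if ((m % n - (k - (m - m % n))) + i.val) < (m % n - (k - (m - m % n))) then
                w (n - (m % n - (k - (m - m % n))) + ((m % n - (k - (m - m % n))) + i.val))
              else -(∑ j : Fin (m % n - (k - (m - m % n))),
                (if airFill n (m % n) (n - (m % n - (k - (m - m % n))) + j.val)
                  (((m % n - (k - (m - m % n))) + i.val) - (m % n - (k - (m - m % n)))) = true
                  then (1:F) else 0) *
                w (n - (m % n - (k - (m - m % n))) + j.val))) *
                (if airFill n (m % n)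
                  ((n - (m % n - (k - (m - m % n))) + ((m % n - (k - (m - m % n))) + i.val)) % n)
                    t.val = true then (1:F) else 0)
              = -(∑ j : Fin (m % n - (k - (m - m % n))),
                (if airFill n (m % n) (n - (m % n - (k - (m - m % n))) + j.val) i.val = true
                  then (1:F) else 0) * w (n - (m % n - (k - (m - m % n))) + j.val)) *
                (if i.val = t.val then (1:F) else 0) := by
            intro i
            rw [if_neg (by omega),
              show ((m % n - (k - (m - m % n))) + i.val) - (m % n - (k - (m - m % n))) = i.val
                by omega,
              show (n - (m % n - (k - (m - m % n))) + ((m % n - (k - (m - m % n))) + i.val))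
                = n + i.val by omega,
              Nat.add_mod_left,
              Nat.mod_eq_of_lt (show i.val < n by have := i.isLt; omega),
              airFill_id hr hrn.le (show i.val < m % n by have := i.isLt; omega)]
            simp
          rw [Finset.sum_congr rfl (fun i _ => hS1 i), Finset.sum_congr rfl (fun i _ => hS2 i)]
          by_cases htt : t.val < k - (m - m % n)
          · rw [Finset.sum_eq_single (⟨t.val, htt⟩ : Fin (k - (m - m % n)))]
            · rw [if_pos rfl, mul_one]
              exact add_neg_cancel _
            · intro d _ hd
              rw [if_neg (fun h => hd (Fin.ext h)), mul_zero]
            · intro h; exact absurd (Finset.mem_univ _) h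
          · have hS1z := hE (t.val - (k - (m - m % n))) (by have := t.isLt; omega)
            rw [show (k - (m - m % n)) + (t.val - (k - (m - m % n))) = t.val by omega] at hS1z
            rw [hS1z, Finset.sum_eq_zero (fun i _ => by
              rw [if_neg (show ¬ (i.val : ℕ) = t.val by omega), mul_zero]), add_zero]
        intro a ha
        by_cases hc : a < n - (m % n - (k - (m - m % n)))
        · exact hz1 a hc
        · have h2 := congrFun hx0 ⟨a - (n - (m % n - (k - (m - m % n)))), by omega⟩
          simp only [Pi.zero_apply] at h2
          rw [if_pos (show a - (n - (m % n - (k - (m - m % n)))) <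
              (m % n - (k - (m - m % n))) by omega)] at h2
          rwa [show n - (m % n - (k - (m - m % n))) +
              (a - (n - (m % n - (k - (m - m % n))))) = a by omega] at h2
  intro x y hxy
  have h0 := key (x - y) (by rw [Matrix.mulVec_sub, hxy, sub_self])
  exact sub_eq_zero.mp h0

end LemA

/-- Achievability: the `K × (D+1)` AIR matrix is a valid scalar linear encoding matrix
for the SNI-SUICP with `U = gcd(K, D+1) - 1`, over any field: for each receiver `k`
there is a vector `u` in the column span of the AIR matrix with `u_k = 1` and `u_j = 0`
for every interfering index `j ∈ {k-U, …, k-1} ∪ {k+1, …, k+D}` (mod `K`). -/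
theorem stmt16 (F : Type*) [Field F] (K D U : ℕ) (hK : 0 < K) (hDK : D + 1 ≤ K)
    (hU : U = Nat.gcd K (D + 1) - 1) :
    ∀ k : ZMod K, ∃ a : Fin (D+1) → F,
      (∑ m : Fin (D+1), a m * (if airFill K (D+1) k.val m.val = true then (1 : F) else 0)) = 1 ∧
      ∀ j : ZMod K,
        ((∃ m : ℕ, 1 ≤ m ∧ m ≤ D ∧ j = k + (m : ZMod K)) ∨
         (∃ m : ℕ, 1 ≤ m ∧ m ≤ U ∧ j = k - (m : ZMod K))) →
        (∑ m : Fin (D+1), a m * (if airFill K (D+1) j.val m.val = true then (1 : F) else 0)) = 0 := by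
  intro k
  haveI : NeZero K := ⟨hK.ne'⟩
  have hgK : Nat.gcd K (D+1) ∣ K := Nat.gcd_dvd_left _ _
  have hgpos : 0 < Nat.gcd K (D+1) := Nat.gcd_pos_of_pos_left _ hK
  have hgleK : Nat.gcd K (D+1) ≤ K := Nat.le_of_dvd hK hgK
  have hkK : k.val < K := ZMod.val_lt k
  have hW : IsUnit (Wmat F K (D+1) k.val) := lemA F (D+1) K k.val (Nat.succ_pos D) hDK hkK
  obtain ⟨a, ha⟩ := Matrix.mulVec_surjective_iff_isUnit.mpr hW
    (fun i : Fin (D+1) => if i = 0 then (1:F) else 0)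
  have haeq : ∀ i : Fin (D+1),
      (∑ c : Fin (D+1), (if airFill K (D+1) ((k.val + i.val) % K) c.val = true then (1:F) else 0)
        * a c) = (if i = 0 then (1:F) else 0) := by
    intro i
    have h0 := congrFun ha i
    simpa [Wmat, Matrix.mulVec, dotProduct] using h0
  set a2 : Fin (D+1) → F :=
    fun c => if c.val % Nat.gcd K (D+1) = k.val % Nat.gcd K (D+1) then a c else 0 with ha2
  have hrow0 : ∀ j : ℕ, j < K → ¬ (j % Nat.gcd K (D+1) = k.val % Nat.gcd K (D+1)) →
      (∑ c : Fin (D+1), a2 c * (if airFill K (D+1) j c.val = true then (1:F) else 0)) = 0 := by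
    intro j hj hne
    refine Finset.sum_eq_zero fun c _ => ?_
    by_cases hc : c.val % Nat.gcd K (D+1) = k.val % Nat.gcd K (D+1)
    · have he : ¬ (airFill K (D+1) j c.val = true) := by
        intro htrue
        exact hne ((airFill_cong (D+1) K j c.val hj c.isLt htrue).trans hc)
      rw [if_neg he, mul_zero]
    · simp only [ha2, if_neg hc, zero_mul]
  have hrow1 : ∀ i : Fin (D+1), ((k.val + i.val) % K) % Nat.gcd K (D+1) = k.val % Nat.gcd K (D+1) →
      (∑ c : Fin (D+1), a2 c * (if airFill K (D+1) ((k.val + i.val) % K) c.val = true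
        then (1:F) else 0)) = (if i = 0 then (1:F) else 0) := by
    intro i hi
    rw [← haeq i]
    refine Finset.sum_congr rfl fun c _ => ?_
    by_cases hc : c.val % Nat.gcd K (D+1) = k.val % Nat.gcd K (D+1)
    · simp only [ha2, if_pos hc]; exact mul_comm _ _
    · have he : ¬ (airFill K (D+1) ((k.val + i.val) % K) c.val = true) := by
        intro htrue
        have := airFill_cong (D+1) K ((k.val + i.val) % K) c.val (Nat.mod_lt _ hK) c.isLt htrue
        exact hc (this.symm.trans hi)
      simp only [ha2, if_neg hc, if_neg he, zero_mul, mul_zero]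
  have hk0 : (k.val + ((0 : Fin (D+1)).val)) % K = k.val := by
    simp [Nat.mod_eq_of_lt hkK]
  refine ⟨a2, ?_, ?_⟩
  · have h0 := hrow1 0 (by rw [hk0])
    rw [hk0] at h0
    simpa using h0
  · intro j hj
    rcases hj with ⟨m', hm1, hm2, hje⟩ | ⟨m', hm1, hm2, hje⟩
    · -- forward interference
      have hmK : m' < K := by omega
      have hjv : j.val = (k.val + m') % K := by
        rw [hje, ZMod.val_add, ZMod.val_natCast, Nat.mod_eq_of_lt hmK]
      by_cases hcl : ((k.val + m') % K) % Nat.gcd K (D+1) = k.val % Nat.gcd K (D+1)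
      · have h1 := hrow1 ⟨m', by omega⟩ hcl
        rw [if_neg (show (⟨m', by omega⟩ : Fin (D+1)) ≠ 0 from fun h => by
          have := congrArg Fin.val h
          simp at this
          omega)] at h1
        rw [hjv]
        exact h1
      · rw [hjv]
        exact hrow0 _ (Nat.mod_lt _ hK) hcl
    · -- backward interference
      have hg2 : 2 ≤ Nat.gcd K (D+1) := by omega
      have hmK : m' < K := by omega
      have hjm : j + (m' : ZMod K) = k := by rw [hje]; ring
      have hksum : (j.val + m') % K = k.val := by
        have h2 : ((j + (m' : ZMod K)).val) = (j.val + m') % K := by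
          rw [ZMod.val_add, ZMod.val_natCast, Nat.mod_eq_of_lt hmK]
        rw [← h2, hjm]
      have hne : ¬ (j.val % Nat.gcd K (D+1) = k.val % Nat.gcd K (D+1)) := by
        intro hcontra
        have e1 : k.val % Nat.gcd K (D+1) = (j.val + m') % Nat.gcd K (D+1) := by
          rw [← hksum, Nat.mod_mod_of_dvd _ hgK]
        have hmg : m' < Nat.gcd K (D+1) := by omega
        have e2 : (j.val + m') % Nat.gcd K (D+1)
            = (j.val % Nat.gcd K (D+1) + m') % Nat.gcd K (D+1) := by
          conv_lhs => rw [Nat.add_mod, Nat.mod_eq_of_lt hmg]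
        have hjg : j.val % Nat.gcd K (D+1) < Nat.gcd K (D+1) := Nat.mod_lt _ (by omega)
        rcases lt_or_ge (j.val % Nat.gcd K (D+1) + m') (Nat.gcd K (D+1)) with hlt | hge
        · rw [e2, Nat.mod_eq_of_lt hlt] at e1
          omega
        · rw [e2, Nat.mod_eq_sub_mod hge,
            Nat.mod_eq_of_lt (show j.val % Nat.gcd K (D+1) + m' - Nat.gcd K (D+1)
              < Nat.gcd K (D+1) by omega)] at e1
          omega
      exact hrow0 j.val (ZMod.val_lt j) hne
end

section
/- If (D+1) divides K, then the K × (D+1) AIR matrix consists of K/(D+1) stacked identity matrices I_{D+1}, and the resulting code c_j = Σ_{m : m ≡ j mod (D+1)} x_m (j ∈ [0, D]) allows every receiver R_k of the SNI-SUICP with U = D (since gcd(K, D+1) = D+1) to decode x_k: every other message appearing in c_{k mod (D+1)} differs from x_k in index by a nonzero multiple of D+1 and hence lies in R_k's side-information. -/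
/-- If `(D+1) ∣ K` then `U = gcd(K, D+1) - 1 = D`, the `K × (D+1)` AIR matrix consists of
`K/(D+1)` stacked identities (`L(j,k) = 1` iff `j ≡ k (mod D+1)`), and the code
`c_j = ∑_{m ≡ j (mod D+1)} x_m` lets every receiver decode: any other message index `m`
appearing in `c_{k mod (D+1)}` lies outside the interference window
`{k-D, …, k+D} (mod K)` of receiver `R_k`, i.e. in its side-information. -/
theorem stmt17 (K D : ℕ) (hdvd : (D + 1) ∣ K) (hDK : D + 1 ≤ K) (hK : 0 < K) :
    Nat.gcd K (D + 1) - 1 = D ∧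
    (∀ j k : ℕ, j < K → k < D + 1 → (airFill K (D+1) j k = true ↔ j % (D+1) = k)) ∧
    (∀ k m : ℕ, k < K → m < K → m % (D+1) = k % (D+1) → m ≠ k →
      ∀ a : ℕ, 1 ≤ a → a ≤ D →
        (m : ZMod K) ≠ (k : ZMod K) + (a : ZMod K) ∧
        (m : ZMod K) ≠ (k : ZMod K) - (a : ZMod K)) := by
  have hmod : K % (D + 1) = 0 := Nat.eq_zero_of_dvd_of_lt hdvd |> fun _ => Nat.mod_eq_zero_of_dvd hdvd
  refine ⟨?_, ?_, ?_⟩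
  · rw [Nat.gcd_eq_right hdvd]; omega
  · intro j k hj hk
    rw [airFill]
    simp [hmod, Nat.succ_ne_zero, hj]
  · intro k m hk hm hcong hne a ha1 haD
    have hdvdmk : ((m : ZMod (D+1)) : ZMod (D+1)) = (k : ZMod (D+1)) := by
      rwa [ZMod.natCast_eq_natCast_iff' ]
    have hane : (a : ZMod (D+1)) ≠ 0 := by
      intro h
      have := (ZMod.natCast_eq_zero_iff a (D+1)).mp h
      have := Nat.le_of_dvd (by omega) this
      omega
    constructor
    · intro h
      have h2 := congrArg (ZMod.castHom hdvd (ZMod (D+1))) h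
      simp only [map_add, map_natCast] at h2
      rw [hdvdmk] at h2
      exact hane (add_eq_left.mp h2.symm)
    · intro h
      have h2 := congrArg (ZMod.castHom hdvd (ZMod (D+1))) h
      simp only [map_sub, map_natCast] at h2
      rw [hdvdmk] at h2
      exact hane (sub_eq_self.mp h2.symm)
end

section
/- Lower bound (converse) for SNI-SUICP: for the single unicast index coding problem with K messages where receiver R_k knows all messages except {x_{k}, x_{k+1}, …, x_{k+D}} (indices mod K) — i.e., the one-sided case U = 0 which has no more side-information than any SNI-SUICP with U ≥ 0 — any valid scalar linear index code over a field must have length at least D+1, since the restriction of the encoding matrix to any D+1 consecutive rows must have full rank D+1. -/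
/-- Converse for the SNI-SUICP: for the single unicast index coding problem with `K`
messages in which receiver `R_k` knows all messages except `{x_k, x_{k+1}, …, x_{k+D}}`
(indices mod `K`; the one-sided case `U = 0`), any valid scalar linear index code with
encoding matrix `M ∈ F^{K × N}` must have length `N ≥ D + 1`: validity means that for
every `k` some vector `u` in the column span of `M` has `u_k = 1` and `u_j = 0` on the
interference `{k+1, …, k+D}` of `R_k`. -/
theorem stmt19 (F : Type*) [Field F] (K D N : ℕ) (hK : 0 < K) (hDK : D + 1 ≤ K)
    (M : Matrix (ZMod K) (Fin N) F)
    (hvalid : ∀ k : ZMod K, ∃ a : Fin N → F,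
      (∑ i : Fin N, a i * M k i) = 1 ∧
      ∀ m : ℕ, 1 ≤ m → m ≤ D → (∑ i : Fin N, a i * M (k + (m : ZMod K)) i) = 0) :
    D + 1 ≤ N := by
  classical
  choose a ha1 ha0 using hvalid
  set w : Fin (D + 1) → (Fin N → F) := fun l i => M ((l : ℕ) : ZMod K) i with hw
  have horth : ∀ l l' : Fin (D + 1), l < l' →
      (∑ i, a ((l : ℕ) : ZMod K) i * w l' i) = 0 := by
    intro l l' hll
    have h1 : 1 ≤ (l' : ℕ) - (l : ℕ) := Nat.sub_pos_of_lt hll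
    have h2 : (l' : ℕ) - (l : ℕ) ≤ D :=
      le_trans (Nat.sub_le _ _) (Nat.lt_succ_iff.mp l'.isLt)
    have h := ha0 ((l : ℕ) : ZMod K) _ h1 h2
    have hc : ((l : ℕ) : ZMod K) + ((((l' : ℕ) - (l : ℕ)) : ℕ) : ZMod K)
        = ((l' : ℕ) : ZMod K) := by
      rw [← Nat.cast_add, Nat.add_sub_cancel' (le_of_lt hll)]
    rw [hc] at h
    exact h
  have li : LinearIndependent F w := by
    rw [Fintype.linearIndependent_iff]
    intro g hg
    have key : ∀ n : ℕ, ∀ l : Fin (D + 1), (l : ℕ) = n → g l = 0 := by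
      intro n
      induction n using Nat.strong_induction_on with
      | _ n ih =>
        intro l hl
        have hsum : (∑ l', g l' * ∑ i, a ((l : ℕ) : ZMod K) i * w l' i) = 0 := by
          have : (∑ i, a ((l : ℕ) : ZMod K) i * (∑ l', g l' • w l') i) = 0 := by
            rw [hg]; simp
          rw [← this]
          simp only [Finset.sum_apply, Pi.smul_apply, smul_eq_mul, Finset.mul_sum]
          rw [Finset.sum_comm]
          exact Finset.sum_congr rfl fun l' _ => Finset.sum_congr rfl fun i _ => by ring
        rw [Finset.sum_eq_single l] at hsum
        · rwa [ha1, mul_one] at hsum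
        · intro l' _ hne
          rcases lt_or_gt_of_ne hne with hlt | hgt
          · rw [ih (l' : ℕ) (hl ▸ hlt) l' rfl, zero_mul]
          · rw [horth l l' hgt, mul_zero]
        · intro h; exact absurd (Finset.mem_univ l) h
    intro l; exact key (l : ℕ) l rfl
  have := li.fintype_card_le_finrank
  simpa [Module.finrank_fin_fun] using this
end
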